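/- arXiv:2106.01047 — 5 statements merged into one kernel-verified Lean document; each statement's English description precedes it below -/
import Mathlib

section
/- Let σ be a finite positive Borel measure on ℝ with compact support and let (P,Q) be a diagonal Padé pair of order n for the Markov function σ̂ (which is holomorphic on ℂ∖supp σ and tends to 0 at ∞). Then ∫ x^k Q(x) dσ(x) = 0 for all k = 0, 1, …, n−1. -/
open MeasureTheory Polynomial Filter Topology Bornology

/-!
Write `σ̂_f(z) = ∫ f(t) / (z - t) dσ(t)`. Since `z / (z - t) = 1 + t / (z - t)`, outside the
support `z σ̂_f(z) = ∫ f dσ + σ̂_{t f}(z)`; iterating, `Q(z) σ̂_1(z) = E(z) + σ̂_Q(z)` with `E` a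
polynomial. The Padé condition makes `Q σ̂_1 - P` tend to zero at infinity, and so does `σ̂_Q`,
hence `E = P` by Liouville and the condition says `σ̂_Q(z) = O(z^(-n-1))`. Using the first identity
to peel off `∫ t^k Q dσ` one power of `z` at a time shows that these moments vanish for `k < n`.
-/

section Asymptotics

variable {𝕜 : Type*} [NormedField 𝕜] {F : 𝕜 → 𝕜}

lemma tendsto_pow_mul_of_norm_pow_succ_mul_le {n : ℕ} {C R : ℝ}
    (h : ∀ z : 𝕜, R < ‖z‖ → ‖z ^ (n + 1) * F z‖ ≤ C) :
    Tendsto (fun z => z ^ n * F z) (cobounded 𝕜) (𝓝 0) := by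
  have hC : Tendsto (fun z : 𝕜 => C * ‖z‖⁻¹) (cobounded 𝕜) (𝓝 0) := by
    simpa using tendsto_norm_cobounded_atTop.inv_tendsto_atTop.const_mul C
  refine squeeze_zero_norm' ?_ hC
  filter_upwards [tendsto_norm_cobounded_atTop.eventually_gt_atTop (max R 0)] with z hz
  have hR : R < ‖z‖ := (le_max_left R 0).trans_lt hz
  have hz0 : 0 < ‖z‖ := (le_max_right R 0).trans_lt hz
  rw [← div_eq_mul_inv, le_div_iff₀ hz0]
  simpa [pow_succ, norm_mul, norm_pow, mul_right_comm] using h z hR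

lemma tendsto_pow_mul_of_le {m n : ℕ} (hmn : m ≤ n)
    (h : Tendsto (fun z => z ^ n * F z) (cobounded 𝕜) (𝓝 0)) :
    Tendsto (fun z => z ^ m * F z) (cobounded 𝕜) (𝓝 0) := by
  refine squeeze_zero_norm' ?_ (tendsto_zero_iff_norm_tendsto_zero.mp h)
  filter_upwards [tendsto_norm_cobounded_atTop.eventually_ge_atTop 1] with z hz
  rw [norm_mul, norm_mul, norm_pow, norm_pow]
  exact mul_le_mul_of_nonneg_right (pow_le_pow_right₀ hz hmn) (norm_nonneg _)

end Asymptotics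

noncomputable def cauchyTransform (σ : Measure ℝ) (f : ℝ → ℂ) (z : ℂ) : ℂ :=
  ∫ t, f t * (z - t)⁻¹ ∂σ

section CauchyTransform

variable {σ : Measure ℝ} {M : ℝ} {f g : ℝ → ℂ} {z : ℂ}

lemma norm_inv_sub_ofReal_le {t : ℝ} (ht : ‖t‖ ≤ M) (hz : M < ‖z‖) :
    ‖(z - t)⁻¹‖ ≤ (‖z‖ - M)⁻¹ := by
  rw [norm_inv]
  refine inv_anti₀ (sub_pos.mpr hz) ?_
  have := norm_sub_norm_le z (t : ℂ)
  rw [Complex.norm_real] at this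
  linarith

lemma cauchyTransform_const_mul (a : ℂ) :
    cauchyTransform σ (fun t => a * f t) z = a * cauchyTransform σ f z := by
  simp only [cauchyTransform, mul_assoc, integral_const_mul]

variable (hσ : ∀ᵐ t ∂σ, ‖t‖ ≤ M)
include hσ

lemma integrable_mul_inv_sub (hf : Integrable f σ) (hz : M < ‖z‖) :
    Integrable (fun t : ℝ => f t * (z - t)⁻¹) σ := by
  simp_rw [mul_comm (f _)]
  exact hf.bdd_mul (by fun_prop) (hσ.mono fun t ht => norm_inv_sub_ofReal_le ht hz)

lemma integrable_ofReal_mul (hf : Integrable f σ) : Integrable (fun t : ℝ => (t : ℂ) * f t) σ :=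
  hf.bdd_mul (by fun_prop) (hσ.mono fun t ht => by rwa [Complex.norm_real])

lemma integrable_eval_mul (hf : Integrable f σ) (p : ℂ[X]) :
    Integrable (fun t : ℝ => p.eval (t : ℂ) * f t) σ := by
  induction p using Polynomial.induction_on with
  | C a => simpa using hf.const_mul a
  | add p q hp hq => simpa only [eval_add, add_mul] using hp.fun_add hq
  | monomial m a h =>
    simpa [pow_succ, mul_assoc, mul_left_comm] using integrable_ofReal_mul hσ h

lemma norm_cauchyTransform_le (hf : Integrable f σ) (hz : M < ‖z‖) :
    ‖cauchyTransform σ f z‖ ≤ (∫ t, ‖f t‖ ∂σ) * (‖z‖ - M)⁻¹ := by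
  rw [← integral_mul_const]
  refine norm_integral_le_of_norm_le (hf.norm.mul_const _) (hσ.mono fun t ht => ?_)
  rw [norm_mul]
  exact mul_le_mul_of_nonneg_left (norm_inv_sub_ofReal_le ht hz) (norm_nonneg _)

lemma tendsto_cauchyTransform_cobounded (hf : Integrable f σ) :
    Tendsto (cauchyTransform σ f) (cobounded ℂ) (𝓝 0) := by
  have hbound : Tendsto (fun z : ℂ => (∫ t, ‖f t‖ ∂σ) * (‖z‖ - M)⁻¹) (cobounded ℂ) (𝓝 0) := by
    have hdist : Tendsto (fun z : ℂ => ‖z‖ - M) (cobounded ℂ) atTop :=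
      tendsto_atTop_add_const_right _ (-M) tendsto_norm_cobounded_atTop
    simpa using hdist.inv_tendsto_atTop.const_mul (∫ t, ‖f t‖ ∂σ)
  refine squeeze_zero_norm' ?_ hbound
  filter_upwards [tendsto_norm_cobounded_atTop.eventually_gt_atTop M] with z hz
  exact norm_cauchyTransform_le hσ hf hz

lemma cauchyTransform_add (hf : Integrable f σ) (hg : Integrable g σ) (hz : M < ‖z‖) :
    cauchyTransform σ (f + g) z = cauchyTransform σ f z + cauchyTransform σ g z := by
  simp only [cauchyTransform, Pi.add_apply, add_mul]
  exact integral_add (integrable_mul_inv_sub hσ hf hz) (integrable_mul_inv_sub hσ hg hz)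

lemma mul_cauchyTransform (hf : Integrable f σ) (hz : M < ‖z‖) :
    z * cauchyTransform σ f z = ∫ t, f t ∂σ + cauchyTransform σ (fun t : ℝ => t * f t) z := by
  have hne : ∀ᵐ t : ℝ ∂σ, z - t ≠ 0 := hσ.mono fun (t : ℝ) ht h => by
    rw [sub_eq_zero] at h
    rw [h, Complex.norm_real] at hz
    linarith
  rw [cauchyTransform, cauchyTransform, ← integral_const_mul,
    ← integral_add hf (integrable_mul_inv_sub hσ (integrable_ofReal_mul hσ hf) hz)]
  refine integral_congr_ae (hne.mono fun t ht => ?_)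
  field_simp
  ring

lemma exists_eval_mul_cauchyTransform (hf : Integrable f σ) (Q : ℂ[X]) :
    ∃ E : ℂ[X], ∀ z : ℂ, M < ‖z‖ →
      Q.eval z * cauchyTransform σ f z =
        E.eval z + cauchyTransform σ (fun t : ℝ => Q.eval (t : ℂ) * f t) z := by
  induction Q using Polynomial.induction_on with
  | C a => exact ⟨0, fun z _ => by simp [cauchyTransform_const_mul]⟩
  | add p q hp hq =>
    obtain ⟨Ep, hEp⟩ := hp
    obtain ⟨Eq, hEq⟩ := hq
    refine ⟨Ep + Eq, fun z hz => ?_⟩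
    have hsum : (fun t : ℝ => (p + q).eval (t : ℂ) * f t) =
        (fun t : ℝ => p.eval (t : ℂ) * f t) + fun t : ℝ => q.eval (t : ℂ) * f t := by
      ext t; simp [add_mul]
    rw [hsum, cauchyTransform_add hσ (integrable_eval_mul hσ hf p)
      (integrable_eval_mul hσ hf q) hz, eval_add, eval_add, add_mul, hEp z hz, hEq z hz]
    ring
  | monomial m a h =>
    obtain ⟨E, hE⟩ := h
    set p : ℂ[X] := C a * X ^ m
    refine ⟨E * X + C (∫ t, p.eval (t : ℂ) * f t ∂σ), fun z hz => ?_⟩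
    have hshift : (fun t : ℝ => (C a * X ^ (m + 1)).eval (t : ℂ) * f t) =
        fun t : ℝ => (t : ℂ) * (p.eval (t : ℂ) * f t) := by
      ext t; simp only [p, eval_mul, eval_C, eval_pow, eval_X]; ring
    have hstep := mul_cauchyTransform hσ (integrable_eval_mul hσ hf p) hz
    have hz_mul : (C a * X ^ (m + 1)).eval z = z * p.eval z := by
      simp only [p, eval_mul, eval_C, eval_pow, eval_X]; ring
    rw [hshift, hz_mul, mul_assoc, hE z hz, mul_add, hstep]
    simp only [eval_add, eval_mul, eval_X, eval_C]
    ring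

theorem integral_pow_mul_eq_zero_of_tendsto {n : ℕ} (hf : Integrable f σ)
    (h : Tendsto (fun z => z ^ n * cauchyTransform σ f z) (cobounded ℂ) (𝓝 0)) :
    ∀ k < n, ∫ t, (t : ℂ) ^ k * f t ∂σ = 0 := by
  induction n generalizing f with
  | zero => intro k hk; omega
  | succ n ih =>
    have hrec : ∀ᶠ z in cobounded ℂ,
        z * cauchyTransform σ f z = ∫ t, f t ∂σ + cauchyTransform σ (fun t : ℝ => t * f t) z :=
      (tendsto_norm_cobounded_atTop.eventually_gt_atTop M).mono fun z hz =>
        mul_cauchyTransform hσ hf hz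
    have hmass : ∫ t, f t ∂σ = 0 := by
      have hlim : Tendsto (fun z => z * cauchyTransform σ f z) (cobounded ℂ)
          (𝓝 (∫ t, f t ∂σ + 0)) :=
        (tendsto_const_nhds.add (tendsto_cauchyTransform_cobounded hσ
          (integrable_ofReal_mul hσ hf))).congr' (hrec.mono fun z hz => hz.symm)
      have hzero : Tendsto (fun z => z * cauchyTransform σ f z) (cobounded ℂ) (𝓝 0) := by
        simpa only [pow_one] using tendsto_pow_mul_of_le (m := 1) (by omega) h
      simpa using tendsto_nhds_unique hlim hzero
    have hshift : Tendsto (fun z => z ^ n * cauchyTransform σ (fun t : ℝ => t * f t) z)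
        (cobounded ℂ) (𝓝 0) := by
      refine h.congr' (hrec.mono fun z hz => ?_)
      rw [pow_succ, mul_assoc, hz, hmass, zero_add]
    intro k hk
    cases k with
    | zero => simpa using hmass
    | succ k =>
      simpa [pow_succ, mul_assoc] using
        ih (integrable_ofReal_mul hσ hf) hshift k (by omega)

end CauchyTransform

theorem pade_denominator_orthogonality_general
    (σ : Measure ℝ) [IsFiniteMeasure σ]
    (K : Set ℝ) (hK : IsCompact K) (hKfull : σ Kᶜ = 0)
    (n : ℕ) (P Q : Polynomial ℂ)
    (hpade : ∃ C R : ℝ, ∀ z : ℂ, R < ‖z‖ →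
      ‖z ^ (n + 1) *
        (Q.eval z * (∫ t : ℝ, (z - (t : ℂ))⁻¹ ∂σ) - P.eval z)‖ ≤ C) :
    ∀ k < n, ∫ t : ℝ, (t : ℂ) ^ k * Q.eval (t : ℂ) ∂σ = 0 := by
  obtain ⟨M, hM⟩ := hK.isBounded.exists_norm_le
  have hσ : ∀ᵐ t ∂σ, ‖t‖ ≤ M := mem_of_superset (mem_ae_iff.mpr hKfull) hM
  have hQ : Integrable (fun t : ℝ => Q.eval (t : ℂ)) σ := by
    simpa using integrable_eval_mul hσ (integrable_const (1 : ℂ)) Q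
  obtain ⟨C, R, hCR⟩ := hpade
  set g : ℂ → ℂ := fun z => Q.eval z * (∫ t : ℝ, (z - (t : ℂ))⁻¹ ∂σ) - P.eval z
  have hg : Tendsto (fun z => z ^ n * g z) (cobounded ℂ) (𝓝 0) :=
    tendsto_pow_mul_of_norm_pow_succ_mul_le hCR
  obtain ⟨E, hE⟩ := exists_eval_mul_cauchyTransform hσ (integrable_const (1 : ℂ)) Q
  have hg_eq : ∀ᶠ z in cobounded ℂ,
      g z = (E - P).eval z + cauchyTransform σ (fun t : ℝ => Q.eval (t : ℂ)) z :=
    (tendsto_norm_cobounded_atTop.eventually_gt_atTop M).mono fun z hz => by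
      have := hE z hz
      simp only [cauchyTransform, one_mul, mul_one] at this
      simp only [g, this, eval_sub, cauchyTransform]
      ring
  have hEP : ∀ z, (E - P).eval z = 0 := fun z =>
    (E - P).differentiable.apply_eq_of_tendsto_cocompact z <| by
      rw [← Metric.cobounded_eq_cocompact]
      have hg0 : Tendsto g (cobounded ℂ) (𝓝 0) := by
        simpa using tendsto_pow_mul_of_le (Nat.zero_le n) hg
      have hlim : Tendsto (fun z => (E - P).eval z) (cobounded ℂ) (𝓝 (0 - 0)) :=
        (hg0.sub (tendsto_cauchyTransform_cobounded hσ hQ)).congr'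
          (hg_eq.mono fun z hz => by rw [hz, add_sub_cancel_right])
      rwa [sub_zero] at hlim
  refine integral_pow_mul_eq_zero_of_tendsto hσ hQ (hg.congr' (hg_eq.mono fun z hz => ?_))
  rw [hz, hEP, zero_add]

/-- Orthogonality of Padé denominators for Markov functions: if `(P, Q)` is a diagonal Padé
pair of order `n` for the Markov function `σ̂(z) = ∫ dσ(t)/(z − t)` of a finite positive
compactly supported measure `σ` on `ℝ`, then `∫ x^k Q(x) dσ(x) = 0` for `k = 0, …, n−1`. -/
theorem pade_denominator_orthogonality
    (σ : Measure ℝ) [IsFiniteMeasure σ]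
    (K : Set ℝ) (hK : IsCompact K) (hKfull : σ Kᶜ = 0)
    (n : ℕ) (P Q : Polynomial ℂ)
    (hP : P.natDegree ≤ n) (hQ : Q.natDegree ≤ n) (hQ0 : Q ≠ 0)
    (hpade : ∃ C R : ℝ, ∀ z : ℂ, R < ‖z‖ →
      ‖z ^ (n + 1) *
        (Q.eval z * (∫ t : ℝ, (z - (t : ℂ))⁻¹ ∂σ) - P.eval z)‖ ≤ C) :
    ∀ k < n, ∫ t : ℝ, (t : ℂ) ^ k * Q.eval (t : ℂ) ∂σ = 0 :=
  pade_denominator_orthogonality_general σ K hK hKfull n P Q hpade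
end

section
/- Let (Q0, Q1, Q2) be a type I Hermite–Padé triple of order n for (f1, f2). Then ∫_Δ (Q1(x) + Q2(x) σ̂(x)) q(x) dμ(x) = 0 for every polynomial q of degree at most 2n. -/
open MeasureTheory Polynomial

open Filter Finset in
lemma aux_poly_zero (P : Polynomial ℂ)
    (h : Filter.Tendsto (fun r : ℝ => P.eval (r : ℂ)) Filter.atTop (nhds 0)) : P = 0 := by
  by_contra hP
  set m := P.natDegree with hm
  have hinv : Tendsto (fun r : ℝ => ((r : ℂ))⁻¹) atTop (nhds 0) := by
    have h1 : Tendsto (fun r : ℝ => r⁻¹) atTop (nhds (0:ℝ)) := tendsto_inv_atTop_zero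
    have h2 := (Complex.continuous_ofReal.tendsto (0:ℝ)).comp h1
    simpa [Function.comp_def, Complex.ofReal_inv] using h2
  have h2 : Tendsto (fun r : ℝ => P.eval (r:ℂ) * ((r:ℂ)⁻¹)^m) atTop (nhds 0) := by
    simpa using h.mul (hinv.pow m)
  have h3 : Tendsto (fun r : ℝ => ∑ j ∈ range (m+1), P.coeff j * ((r:ℂ)⁻¹)^(m-j))
      atTop (nhds (P.coeff m)) := by
    have := tendsto_finset_sum (f := fun (j : ℕ) (r : ℝ) => P.coeff j * ((r:ℂ)⁻¹)^(m-j))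
      (x := atTop) (a := fun j => if j = m then P.coeff m else 0) (range (m+1)) ?_
    · simpa using this
    · intro j hj
      rcases eq_or_ne j m with rfl | hjm
      · simp
      · have hlt : j < m := lt_of_le_of_ne (Nat.lt_succ_iff.mp (mem_range.mp hj)) hjm
        have := (hinv.pow (m - j)).const_mul (P.coeff j)
        simp only [hjm, if_neg hjm]
        simpa [zero_pow (Nat.sub_ne_zero_of_lt hlt)] using this
  have heq : ∀ᶠ r : ℝ in atTop, P.eval (r:ℂ) * ((r:ℂ)⁻¹)^m
      = ∑ j ∈ range (m+1), P.coeff j * ((r:ℂ)⁻¹)^(m-j) := by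
    filter_upwards [eventually_ge_atTop (1:ℝ)] with r hr
    have hrz : (r:ℂ) ≠ 0 := by
      simpa using (by linarith : r ≠ 0)
    rw [Polynomial.eval_eq_sum_range, Finset.sum_mul]
    refine Finset.sum_congr rfl fun j hj => ?_
    have hjm : j ≤ m := Nat.lt_succ_iff.mp (mem_range.mp hj)
    rw [show m = (m-j)+j by omega, pow_add, mul_assoc, Nat.add_sub_cancel]
    rw [show (r:ℂ)^j * (((r:ℂ)⁻¹)^(m-j) * ((r:ℂ)⁻¹)^j)
        = ((r:ℂ)⁻¹)^(m-j) * ((r:ℂ)^j * ((r:ℂ)⁻¹)^j) by ring]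
    rw [← mul_pow, mul_inv_cancel₀ hrz, one_pow, mul_one]
  have := tendsto_nhds_unique (h2.congr' heq) h3
  exact hP (Polynomial.leadingCoeff_eq_zero.mp this.symm)

open Filter Finset in
lemma aux_split (μ : Measure ℝ) [IsFiniteMeasure μ] (hae : ∀ᵐ x ∂μ, x ∈ Set.Icc (-1:ℝ) 1)
    (w : ℝ → ℂ) (hw : AEStronglyMeasurable w μ) (Mw : ℝ)
    (hMw : ∀ x ∈ Set.Icc (-1:ℝ) 1, ‖w x‖ ≤ Mw)
    (Q : Polynomial ℂ) (r : ℝ) (hr : 2 ≤ r) :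
    Q.eval (r:ℂ) * ∫ x : ℝ, w x * ((r:ℂ) - (x:ℂ))⁻¹ ∂μ
      = (∫ x : ℝ, Q.eval (x:ℂ) * w x * ((r:ℂ) - (x:ℂ))⁻¹ ∂μ)
        + ∑ i ∈ range (Q.natDegree+1), ∑ j ∈ range i,
            Q.coeff i * (∫ x : ℝ, (x:ℂ)^(i-1-j) * w x ∂μ) * (r:ℂ)^j := by
  have hMw0 : 0 ≤ Mw := le_trans (norm_nonneg _) (hMw 0 (by norm_num))
  have hQc : Continuous fun x : ℝ => Q.eval (x:ℂ) :=
    (Polynomial.continuous Q).comp Complex.continuous_ofReal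
  obtain ⟨MQ, hMQ⟩ := (isCompact_Icc (a := (-1:ℝ)) (b := 1)).exists_bound_of_continuousOn hQc.continuousOn
  have hMQ0 : 0 ≤ MQ := le_trans (norm_nonneg _) (hMQ 0 (by norm_num))
  have hinv_meas : AEStronglyMeasurable (fun x : ℝ => ((r:ℂ) - (x:ℂ))⁻¹) μ :=
    ((measurable_const.sub Complex.measurable_ofReal).inv).aestronglyMeasurable
  have hinv_bound : ∀ x ∈ Set.Icc (-1:ℝ) 1, ‖((r:ℂ) - (x:ℂ))⁻¹‖ ≤ 1 := by
    intro x hx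
    rw [show (r:ℂ) - (x:ℂ) = ((r - x : ℝ) : ℂ) by push_cast; ring, norm_inv, Complex.norm_real,
      Real.norm_eq_abs]
    rw [abs_of_pos (by cases hx; linarith)]
    rw [inv_le_one_iff₀]
    right; cases hx; linarith
  have hne : ∀ x ∈ Set.Icc (-1:ℝ) 1, (r:ℂ) - (x:ℂ) ≠ 0 := by
    intro x hx h
    rw [show (r:ℂ) - (x:ℂ) = ((r - x : ℝ) : ℂ) by push_cast; ring] at h
    have : r - x = 0 := by exact_mod_cast h
    cases hx; linarith
  have intpow : ∀ p : ℕ, Integrable (fun x : ℝ => (x:ℂ)^p * w x) μ := by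
    intro p
    refine Integrable.mono' (integrable_const Mw)
      (((Complex.measurable_ofReal.pow_const p).aestronglyMeasurable).mul hw) ?_
    filter_upwards [hae] with x hx
    rw [norm_mul]
    calc ‖(x:ℂ)^p‖ * ‖w x‖ ≤ 1 * Mw := by
          refine mul_le_mul ?_ (hMw x hx) (norm_nonneg _) zero_le_one
          rw [norm_pow, Complex.norm_real, Real.norm_eq_abs]
          exact pow_le_one₀ (abs_nonneg _) (abs_le.mpr ⟨hx.1, hx.2⟩)
      _ = Mw := one_mul Mw
  have intA : Integrable (fun x : ℝ => Q.eval (x:ℂ) * w x * ((r:ℂ) - (x:ℂ))⁻¹) μ := by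
    refine Integrable.mono' (integrable_const (MQ * Mw * 1))
      ((hQc.aestronglyMeasurable.mul hw).mul hinv_meas) ?_
    filter_upwards [hae] with x hx
    rw [norm_mul, norm_mul]
    exact mul_le_mul (mul_le_mul (hMQ x hx) (hMw x hx) (norm_nonneg _) hMQ0)
      (hinv_bound x hx) (norm_nonneg _) (by positivity)
  have intT : ∀ i j : ℕ, Integrable
      (fun x : ℝ => Q.coeff i * ((x:ℂ)^(i-1-j) * w x) * (r:ℂ)^j) μ := fun i j =>
    ((intpow (i-1-j)).const_mul _).mul_const _
  rw [← MeasureTheory.integral_const_mul]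
  have hcong : ∫ x : ℝ, Q.eval (r:ℂ) * (w x * ((r:ℂ) - (x:ℂ))⁻¹) ∂μ
      = ∫ x : ℝ, (Q.eval (x:ℂ) * w x * ((r:ℂ) - (x:ℂ))⁻¹
          + ∑ i ∈ range (Q.natDegree+1), ∑ j ∈ range i,
              Q.coeff i * ((x:ℂ)^(i-1-j) * w x) * (r:ℂ)^j) ∂μ := by
    refine integral_congr_ae ?_
    filter_upwards [hae] with x hx
    set z : ℂ := (r:ℂ)
    have hzx : z - (x:ℂ) ≠ 0 := hne x hx
    have hgeom : Q.eval z = Q.eval (x:ℂ)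
        + (∑ i ∈ range (Q.natDegree+1), Q.coeff i *
            ((∑ j ∈ range i, z^j * (x:ℂ)^(i-1-j)))) * (z - (x:ℂ)) := by
      rw [Polynomial.eval_eq_sum_range (x := z), Polynomial.eval_eq_sum_range (x := (x:ℂ)),
        Finset.sum_mul, ← Finset.sum_add_distrib]
      refine Finset.sum_congr rfl fun i _ => ?_
      rw [mul_assoc, geom_sum₂_mul]
      ring
    have hST : (∑ i ∈ range (Q.natDegree+1), Q.coeff i *
          ((∑ j ∈ range i, z^j * (x:ℂ)^(i-1-j)))) * w x
        = ∑ i ∈ range (Q.natDegree+1), ∑ j ∈ range i,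
            Q.coeff i * ((x:ℂ)^(i-1-j) * w x) * z^j := by
      rw [Finset.sum_mul]
      refine Finset.sum_congr rfl fun i _ => ?_
      rw [Finset.mul_sum, Finset.sum_mul]
      refine Finset.sum_congr rfl fun j _ => ?_
      ring
    rw [hgeom, ← hST]
    field_simp
  rw [hcong, integral_add intA (integrable_finset_sum _ fun i _ =>
    integrable_finset_sum _ fun j _ => intT i j)]
  congr 1
  rw [integral_finset_sum _ fun i _ => integrable_finset_sum _ fun j _ => intT i j]
  refine Finset.sum_congr rfl fun i _ => ?_
  rw [integral_finset_sum _ fun j _ => intT i j]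
  refine Finset.sum_congr rfl fun j _ => ?_
  rw [MeasureTheory.integral_mul_const, MeasureTheory.integral_const_mul]

open Filter Finset in
/-- Orthogonality relations for type I Hermite–Padé triples of a Nikishin pair: if
`f1 = μ̂` and `f2` is the Cauchy transform of `σ̂ dμ`, and `(Q0, Q1, Q2)` is a type I
Hermite–Padé triple of order `n` for `(f1, f2)`, then
`∫_Δ (Q1(x) + Q2(x) σ̂(x)) q(x) dμ(x) = 0` for every polynomial `q` of degree at most `2n`. -/
theorem hermite_pade_orthogonality
    (μ : Measure ℝ) [IsFiniteMeasure μ] (hμsupp : μ (Set.Icc (-1 : ℝ) 1)ᶜ = 0)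
    (c d : ℝ) (hcd : c ≤ d) (hdisj : Set.Icc c d ∩ Set.Icc (-1 : ℝ) 1 = ∅)
    (σ : Measure ℝ) [IsFiniteMeasure σ] (hσsupp : σ (Set.Icc c d)ᶜ = 0)
    (f1 f2 : ℂ → ℂ)
    (hf1 : ∀ z : ℂ, f1 z = ∫ x : ℝ, (z - (x : ℂ))⁻¹ ∂μ)
    (hf2 : ∀ z : ℂ, f2 z = ∫ x : ℝ, (∫ t : ℝ, ((x : ℂ) - (t : ℂ))⁻¹ ∂σ) * (z - (x : ℂ))⁻¹ ∂μ)
    (n : ℕ) (Q0 Q1 Q2 : Polynomial ℂ)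
    (hQ0 : Q0.natDegree ≤ n - 1) (hQ1 : Q1.natDegree ≤ n) (hQ2 : Q2.natDegree ≤ n)
    (hnz : ¬(Q0 = 0 ∧ Q1 = 0 ∧ Q2 = 0))
    (hpade : ∃ C R : ℝ, ∀ z : ℂ, R < ‖z‖ →
      ‖z ^ (2 * n + 2) *
        (Q0.eval z + Q1.eval z * f1 z + Q2.eval z * f2 z)‖ ≤ C) :
    ∀ q : Polynomial ℂ, q.natDegree ≤ 2 * n →
      ∫ x : ℝ, (Q1.eval (x : ℂ) +
        Q2.eval (x : ℂ) * (∫ t : ℝ, ((x : ℂ) - (t : ℂ))⁻¹ ∂σ)) * q.eval (x : ℂ) ∂μ = 0 := by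
  intro q hq
  classical
  obtain ⟨Cb, R, hCb⟩ := hpade
  -- a.e. membership
  have haeμ : ∀ᵐ x ∂μ, x ∈ Set.Icc (-1:ℝ) 1 := by rw [ae_iff]; exact hμsupp
  have haeσ : ∀ᵐ t ∂σ, t ∈ Set.Icc c d := by rw [ae_iff]; exact hσsupp
  -- separation of the supports
  have hsplit : 1 < c ∨ d < -1 := by
    by_contra hcon
    push_neg at hcon
    obtain ⟨h1, h2⟩ := hcon
    have hmem : max c (-1) ∈ Set.Icc c d ∩ Set.Icc (-1:ℝ) 1 :=
      ⟨Set.mem_Icc.mpr ⟨le_max_left _ _, max_le hcd h2⟩,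
       Set.mem_Icc.mpr ⟨le_max_right _ _, max_le h1 (by norm_num)⟩⟩
    rw [hdisj] at hmem
    exact hmem
  obtain ⟨δ, hδpos, hδ⟩ : ∃ δ : ℝ, 0 < δ ∧
      ∀ x ∈ Set.Icc (-1:ℝ) 1, ∀ t ∈ Set.Icc c d, δ ≤ |x - t| := by
    rcases hsplit with h | h
    · refine ⟨c - 1, by linarith, fun x hx t ht => ?_⟩
      obtain ⟨hx1, hx2⟩ := hx; obtain ⟨ht1, ht2⟩ := ht
      rw [abs_sub_comm, abs_of_nonneg (by linarith)]
      linarith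
    · refine ⟨-1 - d, by linarith, fun x hx t ht => ?_⟩
      obtain ⟨hx1, hx2⟩ := hx; obtain ⟨ht1, ht2⟩ := ht
      rw [abs_of_nonneg (by linarith)]
      linarith
  -- the second Markov function weight
  set Φ : ℝ → ℂ := fun y => ∫ t : ℝ, ((y:ℂ) - (t:ℂ))⁻¹ ∂σ with hΦdef
  have hΦmeas : AEStronglyMeasurable Φ μ := by
    have hsm : StronglyMeasurable fun p : ℝ × ℝ => ((p.1:ℂ) - (p.2:ℂ))⁻¹ :=
      (((Complex.measurable_ofReal.comp measurable_fst).sub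
        (Complex.measurable_ofReal.comp measurable_snd)).inv).stronglyMeasurable
    exact (hsm.integral_prod_right').aestronglyMeasurable
  set MΦ : ℝ := δ⁻¹ * (σ Set.univ).toReal with hMΦdef
  have hΦbound : ∀ x ∈ Set.Icc (-1:ℝ) 1, ‖Φ x‖ ≤ MΦ := by
    intro x hx
    refine le_trans (norm_integral_le_of_norm_le_const ?_) (le_of_eq rfl)
    filter_upwards [haeσ] with t ht
    rw [show (x:ℂ) - (t:ℂ) = ((x - t : ℝ) : ℂ) by push_cast; ring, norm_inv,
      Complex.norm_real, Real.norm_eq_abs]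
    exact inv_anti₀ hδpos (hδ x hx t ht)
  -- the function g and its properties
  set g : ℝ → ℂ := fun x => Q1.eval (x:ℂ) + Q2.eval (x:ℂ) * Φ x with hgdef
  have hQ1c : Continuous fun x : ℝ => Q1.eval (x:ℂ) :=
    (Polynomial.continuous Q1).comp Complex.continuous_ofReal
  have hQ2c : Continuous fun x : ℝ => Q2.eval (x:ℂ) :=
    (Polynomial.continuous Q2).comp Complex.continuous_ofReal
  have hgmeas : AEStronglyMeasurable g μ :=
    (hQ1c.aestronglyMeasurable).add ((hQ2c.aestronglyMeasurable).mul hΦmeas)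
  obtain ⟨M1, hM1⟩ := (isCompact_Icc (a := (-1:ℝ)) (b := 1)).exists_bound_of_continuousOn
    hQ1c.continuousOn
  obtain ⟨M2, hM2⟩ := (isCompact_Icc (a := (-1:ℝ)) (b := 1)).exists_bound_of_continuousOn
    hQ2c.continuousOn
  have hM20 : 0 ≤ M2 := le_trans (norm_nonneg _) (hM2 0 (by norm_num))
  have hMΦ0 : 0 ≤ MΦ := by positivity
  set Mg : ℝ := M1 + M2 * MΦ with hMgdef
  have hgbound : ∀ x ∈ Set.Icc (-1:ℝ) 1, ‖g x‖ ≤ Mg := by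
    intro x hx
    refine le_trans (norm_add_le _ _) ?_
    refine add_le_add (hM1 x hx) ?_
    rw [norm_mul]
    exact mul_le_mul (hM2 x hx) (hΦbound x hx) (norm_nonneg _) hM20
  have hMg0 : 0 ≤ Mg := le_trans (norm_nonneg (g 0)) (hgbound 0 (by norm_num))
  -- basic facts about the Cauchy kernel
  have hne : ∀ r : ℝ, 2 ≤ r → ∀ x ∈ Set.Icc (-1:ℝ) 1, (r:ℂ) - (x:ℂ) ≠ 0 := by
    intro r hr x hx h
    obtain ⟨hx1, hx2⟩ := hx
    rw [show (r:ℂ) - (x:ℂ) = ((r - x : ℝ) : ℂ) by push_cast; ring] at h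
    have : r - x = 0 := by exact_mod_cast h
    linarith
  have hinvmeas : ∀ r : ℝ, AEStronglyMeasurable (fun x : ℝ => ((r:ℂ) - (x:ℂ))⁻¹) μ :=
    fun r => ((measurable_const.sub Complex.measurable_ofReal).inv).aestronglyMeasurable
  have hinvb : ∀ r : ℝ, 2 ≤ r → ∀ x ∈ Set.Icc (-1:ℝ) 1,
      ‖((r:ℂ) - (x:ℂ))⁻¹‖ ≤ (r-1)⁻¹ := by
    intro r hr x hx
    obtain ⟨hx1, hx2⟩ := hx
    rw [show (r:ℂ) - (x:ℂ) = ((r - x : ℝ) : ℂ) by push_cast; ring, norm_inv,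
      Complex.norm_real, Real.norm_eq_abs, abs_of_pos (by linarith)]
    exact inv_anti₀ (by linarith) (by linarith)
  have hpowb : ∀ p : ℕ, ∀ x ∈ Set.Icc (-1:ℝ) 1, ‖(x:ℂ)^p‖ ≤ 1 := by
    intro p x hx
    rw [norm_pow, Complex.norm_real, Real.norm_eq_abs]
    exact pow_le_one₀ (abs_nonneg _) (abs_le.mpr ⟨hx.1, hx.2⟩)
  -- integrability helper
  have key_int : ∀ (h : ℝ → ℂ) (M : ℝ), AEStronglyMeasurable h μ →
      (∀ x ∈ Set.Icc (-1:ℝ) 1, ‖h x‖ ≤ M) → Integrable h μ := fun h M hm hb =>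
    Integrable.mono' (integrable_const M) hm (haeμ.mono fun x hx => hb x hx)
  have intk : ∀ p : ℕ, Integrable (fun x : ℝ => g x * (x:ℂ)^p) μ := by
    intro p
    refine key_int _ (Mg * 1)
      (hgmeas.mul ((Complex.measurable_ofReal.pow_const p).aestronglyMeasurable))
      (fun x hx => ?_)
    rw [norm_mul]
    exact mul_le_mul (hgbound x hx) (hpowb p x hx) (norm_nonneg _) hMg0
  have intR : ∀ p : ℕ, ∀ r : ℝ, 2 ≤ r →
      Integrable (fun x : ℝ => g x * (x:ℂ)^p * ((r:ℂ) - (x:ℂ))⁻¹) μ := by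
    intro p r hr
    refine key_int _ (Mg * 1 * 1)
      ((hgmeas.mul ((Complex.measurable_ofReal.pow_const p).aestronglyMeasurable)).mul
        (hinvmeas r)) (fun x hx => ?_)
    rw [norm_mul, norm_mul]
    refine mul_le_mul (mul_le_mul (hgbound x hx) (hpowb p x hx) (norm_nonneg _) hMg0)
      (le_trans (hinvb r hr x hx) ?_) (norm_nonneg _) (by positivity)
    rw [inv_le_one_iff₀]; right; linarith
  -- notation for F and the Cauchy transform of g dμ
  set F : ℝ → ℂ := fun r => Q0.eval (r:ℂ) + Q1.eval (r:ℂ) * f1 (r:ℂ)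
    + Q2.eval (r:ℂ) * f2 (r:ℂ) with hFdef
  set Cz : ℝ → ℂ := fun r => ∫ x : ℝ, g x * ((r:ℂ) - (x:ℂ))⁻¹ ∂μ with hCzdef
  -- the main algebraic identity
  have main_id : ∀ r : ℝ, 2 ≤ r → F r = (Q0.eval (r:ℂ)
      + ∑ i ∈ range (Q1.natDegree+1), ∑ j ∈ range i,
          Q1.coeff i * (∫ x : ℝ, (x:ℂ)^(i-1-j) * (1:ℂ) ∂μ) * (r:ℂ)^j
      + ∑ i ∈ range (Q2.natDegree+1), ∑ j ∈ range i,
          Q2.coeff i * (∫ x : ℝ, (x:ℂ)^(i-1-j) * Φ x ∂μ) * (r:ℂ)^j)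
      + Cz r := by
    intro r hr
    have h1 := aux_split μ haeμ (fun _ => (1:ℂ)) aestronglyMeasurable_const 1
      (fun x _ => by norm_num) Q1 r hr
    have h2 := aux_split μ haeμ Φ hΦmeas MΦ hΦbound Q2 r hr
    have hf1r : f1 (r:ℂ) = ∫ x : ℝ, (1:ℂ) * ((r:ℂ) - (x:ℂ))⁻¹ ∂μ := by
      rw [hf1]; simp only [one_mul]
    have hf2r : f2 (r:ℂ) = ∫ x : ℝ, Φ x * ((r:ℂ) - (x:ℂ))⁻¹ ∂μ := hf2 _
    have intc1 : Integrable (fun x : ℝ => Q1.eval (x:ℂ) * (1:ℂ) * ((r:ℂ) - (x:ℂ))⁻¹) μ := by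
      refine key_int _ (M1 * 1) ((hQ1c.aestronglyMeasurable.mul
        aestronglyMeasurable_const).mul (hinvmeas r)) (fun x hx => ?_)
      rw [norm_mul, norm_mul, norm_one, mul_one]
      refine mul_le_mul (hM1 x hx) (le_trans (hinvb r hr x hx) ?_) (norm_nonneg _)
        (le_trans (norm_nonneg _) (hM1 0 (by norm_num)))
      rw [inv_le_one_iff₀]; right; linarith
    have intc2 : Integrable (fun x : ℝ => Q2.eval (x:ℂ) * Φ x * ((r:ℂ) - (x:ℂ))⁻¹) μ := by
      refine key_int _ (M2 * MΦ * 1) ((hQ2c.aestronglyMeasurable.mul hΦmeas).mul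
        (hinvmeas r)) (fun x hx => ?_)
      rw [norm_mul, norm_mul]
      refine mul_le_mul (mul_le_mul (hM2 x hx) (hΦbound x hx) (norm_nonneg _) hM20)
        (le_trans (hinvb r hr x hx) ?_) (norm_nonneg _) (by positivity)
      rw [inv_le_one_iff₀]; right; linarith
    have hsum : (∫ x : ℝ, Q1.eval (x:ℂ) * (1:ℂ) * ((r:ℂ) - (x:ℂ))⁻¹ ∂μ)
        + (∫ x : ℝ, Q2.eval (x:ℂ) * Φ x * ((r:ℂ) - (x:ℂ))⁻¹ ∂μ) = Cz r := by
      rw [← integral_add intc1 intc2, hCzdef]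
      refine integral_congr_ae (Eventually.of_forall fun x => ?_)
      simp only [hgdef]
      ring
    rw [hFdef]
    simp only []
    rw [hf1r, hf2r, h1, h2]
    linear_combination hsum
  -- the polynomial part
  set P : Polynomial ℂ := Q0
    + ∑ i ∈ range (Q1.natDegree+1), ∑ j ∈ range i,
        Polynomial.C (Q1.coeff i * ∫ x : ℝ, (x:ℂ)^(i-1-j) * (1:ℂ) ∂μ) * Polynomial.X^j
    + ∑ i ∈ range (Q2.natDegree+1), ∑ j ∈ range i,
        Polynomial.C (Q2.coeff i * ∫ x : ℝ, (x:ℂ)^(i-1-j) * Φ x ∂μ) * Polynomial.X^j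
    with hPdef
  have hPeval : ∀ z : ℂ, P.eval z = Q0.eval z
      + ∑ i ∈ range (Q1.natDegree+1), ∑ j ∈ range i,
          Q1.coeff i * (∫ x : ℝ, (x:ℂ)^(i-1-j) * (1:ℂ) ∂μ) * z^j
      + ∑ i ∈ range (Q2.natDegree+1), ∑ j ∈ range i,
          Q2.coeff i * (∫ x : ℝ, (x:ℂ)^(i-1-j) * Φ x ∂μ) * z^j := by
    intro z
    rw [hPdef]
    simp only [Polynomial.eval_add, Polynomial.eval_finset_sum, Polynomial.eval_mul,
      Polynomial.eval_C, Polynomial.eval_pow, Polynomial.eval_X, mul_assoc]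
  -- decay of the remainder integrals
  have htendsinv : Tendsto (fun r : ℝ => (r-1)⁻¹) atTop (nhds 0) := by
    have h1 : Tendsto (fun r : ℝ => r - 1) atTop atTop :=
      tendsto_atTop_add_const_right atTop (-1) tendsto_id
    exact tendsto_inv_atTop_zero.comp h1
  have hRem : ∀ p : ℕ, Tendsto
      (fun r : ℝ => ∫ x : ℝ, g x * (x:ℂ)^p * ((r:ℂ) - (x:ℂ))⁻¹ ∂μ) atTop (nhds 0) := by
    intro p
    refine squeeze_zero_norm' (a := fun r => Mg * (μ Set.univ).toReal * (r-1)⁻¹) ?_ ?_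
    · filter_upwards [eventually_ge_atTop (2:ℝ)] with r hr
      have hb : ∀ᵐ x ∂μ, ‖g x * (x:ℂ)^p * ((r:ℂ) - (x:ℂ))⁻¹‖ ≤ Mg * (r-1)⁻¹ := by
        filter_upwards [haeμ] with x hx
        rw [norm_mul, norm_mul]
        calc ‖g x‖ * ‖(x:ℂ)^p‖ * ‖((r:ℂ) - (x:ℂ))⁻¹‖
            ≤ (Mg * 1) * (r-1)⁻¹ := by
              refine mul_le_mul (mul_le_mul (hgbound x hx) (hpowb p x hx)
                (norm_nonneg _) hMg0) (hinvb r hr x hx) (norm_nonneg _) (by positivity)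
          _ = Mg * (r-1)⁻¹ := by ring
      calc ‖∫ x : ℝ, g x * (x:ℂ)^p * ((r:ℂ) - (x:ℂ))⁻¹ ∂μ‖
          ≤ (Mg * (r-1)⁻¹) * (μ Set.univ).toReal := norm_integral_le_of_norm_le_const hb
        _ = Mg * (μ Set.univ).toReal * (r-1)⁻¹ := by ring
    · simpa using htendsinv.const_mul (Mg * (μ Set.univ).toReal)
  have hCz0 : Tendsto Cz atTop (nhds 0) := by
    have h0 := hRem 0
    refine h0.congr fun r => ?_
    rw [hCzdef]
    exact integral_congr_ae (Eventually.of_forall fun x => by simp)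
  -- bound on F coming from the Padé condition
  have hFk : ∀ k : ℕ, k ≤ 2*n+1 → ∀ᶠ r : ℝ in atTop, ‖(r:ℂ)^k * F r‖ ≤ Cb * r⁻¹ := by
    intro k hk
    filter_upwards [eventually_gt_atTop (max R 1)] with r hrR
    have hr1 : 1 ≤ r := le_of_lt (lt_of_le_of_lt (le_max_right R 1) hrR)
    have hr0 : 0 < r := lt_of_lt_of_le one_pos hr1
    have h := hCb (r:ℂ) (by
      rw [Complex.norm_real, Real.norm_eq_abs, abs_of_pos hr0]
      exact lt_of_le_of_lt (le_max_left R 1) hrR)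
    rw [norm_mul, norm_pow, Complex.norm_real, Real.norm_eq_abs, abs_of_pos hr0] at h
    have hFnorm : r^(2*n+2) * ‖F r‖ ≤ Cb := h
    rw [norm_mul, norm_pow, Complex.norm_real, Real.norm_eq_abs, abs_of_pos hr0]
    have hchain : r^(k+1) * ‖F r‖ ≤ Cb :=
      le_trans (mul_le_mul_of_nonneg_right (pow_le_pow_right₀ hr1 (by omega))
        (norm_nonneg _)) hFnorm
    have : r^k * ‖F r‖ = (r^(k+1) * ‖F r‖) * r⁻¹ := by
      field_simp
      ring
    rw [this]
    exact mul_le_mul_of_nonneg_right hchain (by positivity)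
  have htCb : Tendsto (fun r : ℝ => Cb * r⁻¹) atTop (nhds 0) := by
    simpa using tendsto_inv_atTop_zero.const_mul Cb
  -- the polynomial part vanishes
  have hP0 : P = 0 := by
    apply aux_poly_zero
    have hF0 : Tendsto F atTop (nhds 0) := by
      refine squeeze_zero_norm' ?_ htCb
      filter_upwards [hFk 0 (by omega)] with r hr
      simpa using hr
    have hdiff : Tendsto (fun r : ℝ => F r - Cz r) atTop (nhds 0) := by
      simpa using hF0.sub hCz0
    refine Tendsto.congr' ?_ hdiff
    filter_upwards [eventually_ge_atTop (2:ℝ)] with r hr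
    rw [hPeval, main_id r hr]
    ring
  have hFC : ∀ r : ℝ, 2 ≤ r → F r = Cz r := by
    intro r hr
    calc F r = P.eval (r:ℂ) + Cz r := by rw [hPeval]; exact main_id r hr
      _ = Cz r := by rw [hP0]; simp
  -- the moments vanish
  have hmom : ∀ k : ℕ, k ≤ 2*n → (∫ x : ℝ, g x * (x:ℂ)^k ∂μ) = 0 := by
    intro k
    induction k using Nat.strong_induction_on with
    | _ k IH =>
    intro hk
    have hid : ∀ r : ℝ, 2 ≤ r → (r:ℂ)^(k+1) * Cz r
        = (∫ x : ℝ, g x * (x:ℂ)^k ∂μ)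
          + ∫ x : ℝ, g x * (x:ℂ)^(k+1) * ((r:ℂ) - (x:ℂ))⁻¹ ∂μ := by
      intro r hr
      rw [hCzdef]
      simp only []
      rw [← MeasureTheory.integral_const_mul]
      have e2 : ∫ x : ℝ, (r:ℂ)^(k+1) * (g x * ((r:ℂ) - (x:ℂ))⁻¹) ∂μ
          = ∫ x : ℝ, ((∑ i ∈ range (k+1), (r:ℂ)^i * (g x * (x:ℂ)^(k-i)))
              + g x * (x:ℂ)^(k+1) * ((r:ℂ) - (x:ℂ))⁻¹) ∂μ := by
        refine integral_congr_ae ?_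
        filter_upwards [haeμ] with x hx
        have hzx : (r:ℂ) - (x:ℂ) ≠ 0 := hne r hr x hx
        have hgs0 := geom_sum₂_mul (r:ℂ) ((x:ℂ)) (k+1)
        simp only [Nat.add_sub_cancel] at hgs0
        have hgs : ((r:ℂ))^(k+1) = (∑ i ∈ range (k+1), (r:ℂ)^i * (x:ℂ)^(k-i))
            * ((r:ℂ) - (x:ℂ)) + (x:ℂ)^(k+1) := by
          rw [hgs0]; ring
        have hS : (∑ i ∈ range (k+1), (r:ℂ)^i * (x:ℂ)^(k-i)) * g x
            = ∑ i ∈ range (k+1), (r:ℂ)^i * (g x * (x:ℂ)^(k-i)) := by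
          rw [Finset.sum_mul]
          exact Finset.sum_congr rfl fun i _ => by ring
        rw [hgs, ← hS]
        field_simp
      rw [e2, integral_add (integrable_finset_sum _ fun i _ => (intk (k-i)).const_mul _)
        (intR (k+1) r hr), integral_finset_sum _ fun i _ => (intk (k-i)).const_mul _]
      congr 1
      calc ∑ i ∈ range (k+1), ∫ x : ℝ, (r:ℂ)^i * (g x * (x:ℂ)^(k-i)) ∂μ
          = ∑ i ∈ range (k+1), (r:ℂ)^i * ∫ x : ℝ, g x * (x:ℂ)^(k-i) ∂μ := by
            exact Finset.sum_congr rfl fun i _ => MeasureTheory.integral_const_mul _ _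
        _ = ∫ x : ℝ, g x * (x:ℂ)^k ∂μ := by
            rw [Finset.sum_eq_single 0]
            · simp
            · intro i hi hne0
              have hik := mem_range.mp hi
              rw [IH (k-i) (by omega) (by omega), mul_zero]
            · intro h; simp at h
    have t1 : Tendsto (fun r : ℝ => (r:ℂ)^(k+1) * Cz r) atTop (nhds 0) := by
      refine squeeze_zero_norm' ?_ htCb
      filter_upwards [hFk (k+1) (by omega), eventually_ge_atTop (2:ℝ)] with r h1 h2
      rw [← hFC r h2]
      exact h1
    have t3 : Tendsto (fun r : ℝ => (r:ℂ)^(k+1) * Cz r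
        - ∫ x : ℝ, g x * (x:ℂ)^(k+1) * ((r:ℂ) - (x:ℂ))⁻¹ ∂μ) atTop (nhds 0) := by
      simpa using t1.sub (hRem (k+1))
    have heq : (fun r : ℝ => (r:ℂ)^(k+1) * Cz r
        - ∫ x : ℝ, g x * (x:ℂ)^(k+1) * ((r:ℂ) - (x:ℂ))⁻¹ ∂μ)
        =ᶠ[atTop] fun _ => ∫ x : ℝ, g x * (x:ℂ)^k ∂μ := by
      filter_upwards [eventually_ge_atTop (2:ℝ)] with r hr
      rw [hid r hr]
      ring
    have t5 : Tendsto (fun _ : ℝ => ∫ x : ℝ, g x * (x:ℂ)^k ∂μ) atTop (nhds 0) :=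
      Filter.Tendsto.congr' heq t3
    exact tendsto_nhds_unique tendsto_const_nhds t5
  -- conclusion
  have hfinal : ∫ x : ℝ, g x * q.eval (x:ℂ) ∂μ = 0 := by
    have hqe : ∀ x : ℝ, g x * q.eval (x:ℂ)
        = ∑ i ∈ range (2*n+1), q.coeff i * (g x * (x:ℂ)^i) := by
      intro x
      rw [Polynomial.eval_eq_sum_range' (Nat.lt_succ_of_le hq), Finset.mul_sum]
      exact Finset.sum_congr rfl fun i _ => by ring
    calc ∫ x : ℝ, g x * q.eval (x:ℂ) ∂μ
        = ∫ x : ℝ, ∑ i ∈ range (2*n+1), q.coeff i * (g x * (x:ℂ)^i) ∂μ := by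
          simp only [hqe]
      _ = ∑ i ∈ range (2*n+1), ∫ x : ℝ, q.coeff i * (g x * (x:ℂ)^i) ∂μ :=
          integral_finset_sum _ fun i _ => (intk i).const_mul _
      _ = 0 := by
          refine Finset.sum_eq_zero fun i hi => ?_
          rw [MeasureTheory.integral_const_mul, hmom i (by
            have := mem_range.mp hi; omega), mul_zero]
  have hgoal : ∀ x : ℝ, (Q1.eval (x:ℂ) + Q2.eval (x:ℂ)
      * (∫ t : ℝ, ((x:ℂ) - (t:ℂ))⁻¹ ∂σ)) * q.eval (x:ℂ) = g x * q.eval (x:ℂ) := by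
    intro x
    rw [hgdef]
  simp only [hgoal]
  exact hfinal
end

section
/- Let μ be a finite positive Borel measure on [−1,1] whose support is an infinite set, let m ∈ ℕ, and let g : [−1,1] → ℝ be continuous, not identically zero on supp μ, with ∫ g·q dμ = 0 for every polynomial q of degree at most m. Then g has at least m+1 distinct zeros in the open interval (−1,1). -/
open MeasureTheory Polynomial

/-- A continuous nonvanishing function on an order-connected set has constant sign. -/
lemma auxSignConst {f : ℝ → ℝ} {s : Set ℝ} (hs : s.OrdConnected) (hf : ContinuousOn f s)
    (h0 : ∀ x ∈ s, f x ≠ 0) : (∀ x ∈ s, 0 < f x) ∨ (∀ x ∈ s, f x < 0) := by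
  by_contra h
  push_neg at h
  obtain ⟨⟨x, hx, hfx⟩, ⟨y, hy, hfy⟩⟩ := h
  have hsub : Set.uIcc x y ⊆ s := hs.uIcc_subset hx hy
  have h0m : (0:ℝ) ∈ Set.uIcc (f x) (f y) := Set.mem_uIcc.mpr (Or.inl ⟨hfx, hfy⟩)
  obtain ⟨z, hz, hz0⟩ := intermediate_value_uIcc (hf.mono hsub) h0m
  exact h0 z (hsub hz) hz0

/-- Nonnegativity on an open interval extends to the closed interval by continuity. -/
lemma auxNonnegClosure {f : ℝ → ℝ} {a b : ℝ} (hab : a < b) (hf : ContinuousOn f (Set.Icc a b))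
    (h : ∀ x ∈ Set.Ioo a b, 0 ≤ f x) : ∀ x ∈ Set.Icc a b, 0 ≤ f x := by
  intro x hx
  have hxc : x ∈ closure (Set.Ioo a b) := by rw [closure_Ioo hab.ne]; exact hx
  have hne : (nhdsWithin x (Set.Ioo a b)).NeBot := mem_closure_iff_nhdsWithin_neBot.mp hxc
  have ht : Filter.Tendsto f (nhdsWithin x (Set.Ioo a b)) (nhds (f x)) :=
    (hf x hx).mono_left (nhdsWithin_mono x Set.Ioo_subset_Icc_self)
  exact ge_of_tendsto ht (Filter.eventually_of_mem self_mem_nhdsWithin h)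

/-- Key construction: if the zeros of `g` inside `(a,b)` are exactly the finite set `Z`, then
there is a nonzero polynomial of degree at most `|Z|`, all of whose roots lie in `Z`, such that
`g·q ≥ 0` on `[a,b]`. -/
lemma auxExistsPoly (g : ℝ → ℝ) (Z : Finset ℝ) : ∀ (a b : ℝ), ContinuousOn g (Set.Icc a b) →
    (↑Z ⊆ Set.Ioo a b) → (∀ x ∈ Set.Ioo a b, (g x = 0 ↔ x ∈ Z)) →
    ∃ q : Polynomial ℝ, q ≠ 0 ∧ q.natDegree ≤ Z.card ∧ (∀ x, q.eval x = 0 → x ∈ Z) ∧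
      ∀ x ∈ Set.Icc a b, 0 ≤ g x * q.eval x := by
  induction Z using Finset.strongInduction with
  | _ Z ih =>
    intro a b hg hZsub hZ
    rcases Z.eq_empty_or_nonempty with hZe | hne
    · subst hZe
      rcases lt_trichotomy a b with hab | hab | hab
      · -- no zeros : g has constant sign on (a,b)
        have h0 : ∀ x ∈ Set.Ioo a b, g x ≠ 0 := by
          intro x hx hx0
          simpa using (hZ x hx).mp hx0
        rcases auxSignConst Set.ordConnected_Ioo (hg.mono Set.Ioo_subset_Icc_self) h0 with
          hpos | hneg
        · refine ⟨C 1, by simp, by simp, by simp, ?_⟩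
          refine auxNonnegClosure hab (hg.mul (Polynomial.continuous _).continuousOn) ?_
          intro x hx; simpa using (hpos x hx).le
        · refine ⟨C (-1), by simp, by simp, by simp, ?_⟩
          refine auxNonnegClosure hab (hg.mul (Polynomial.continuous _).continuousOn) ?_
          intro x hx; simp only [eval_C, mul_neg, mul_one]
          linarith [hneg x hx]
      · subst hab
        by_cases hga : 0 ≤ g a
        · refine ⟨C 1, by simp, by simp, by simp, ?_⟩
          intro x hx
          rw [Set.Icc_self, Set.mem_singleton_iff] at hx
          subst hx; simpa using hga
        · refine ⟨C (-1), by simp, by simp, by simp, ?_⟩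
          intro x hx
          rw [Set.Icc_self, Set.mem_singleton_iff] at hx
          subst hx; simp only [eval_C, mul_neg, mul_one]; linarith
      · refine ⟨C 1, by simp, by simp, by simp, ?_⟩
        intro x hx
        rw [Set.Icc_eq_empty (not_le.mpr hab)] at hx
        exact absurd hx (Set.notMem_empty x)
    · -- inductive step: split off the largest zero
      set z := Z.max' hne with hzdef
      have hzZ : z ∈ Z := Z.max'_mem hne
      have hzI : z ∈ Set.Ioo a b := hZsub hzZ
      have herase : Z.erase z ⊂ Z := Finset.erase_ssubset hzZ
      -- apply IH on [a, z]
      have hg' : ContinuousOn g (Set.Icc a z) :=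
        hg.mono (Set.Icc_subset_Icc_right hzI.2.le)
      have hsub' : ↑(Z.erase z) ⊆ Set.Ioo a z := by
        intro w hw
        simp only [Finset.coe_erase, Set.mem_diff, Finset.mem_coe, Set.mem_singleton_iff] at hw
        exact ⟨(hZsub hw.1).1, lt_of_le_of_ne (Z.le_max' w hw.1) hw.2⟩
      have hZ' : ∀ x ∈ Set.Ioo a z, (g x = 0 ↔ x ∈ Z.erase z) := by
        intro x hx
        have hxab : x ∈ Set.Ioo a b := ⟨hx.1, hx.2.trans hzI.2⟩
        rw [hZ x hxab, Finset.mem_erase]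
        constructor
        · exact fun h => ⟨ne_of_lt hx.2, h⟩
        · exact fun h => h.2
      obtain ⟨q', hq'0, hdeg', hroots', hpos'⟩ := ih (Z.erase z) herase a z hg' hsub' hZ'
      -- on (z, b), g·q' is continuous and nonvanishing
      have hIoosub : Set.Ioo z b ⊆ Set.Icc a b := fun x hx => ⟨(hzI.1.trans hx.1).le, hx.2.le⟩
      have hcont2 : ContinuousOn (fun x => g x * q'.eval x) (Set.Ioo z b) :=
        (hg.mono hIoosub).mul (Polynomial.continuous q').continuousOn
      have hnv : ∀ x ∈ Set.Ioo z b, g x * q'.eval x ≠ 0 := by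
        intro x hx
        have hxab : x ∈ Set.Ioo a b := ⟨hzI.1.trans hx.1, hx.2⟩
        apply mul_ne_zero
        · intro h0
          have := (hZ x hxab).mp h0
          exact absurd (Z.le_max' x this) (not_le.mpr hx.1)
        · intro h0
          have := hroots' x h0
          exact absurd ((hsub' this).2) (not_lt.mpr hx.1.le)
      have hcard : (Z.erase z).card + 1 = Z.card := by
        rw [Finset.card_erase_of_mem hzZ]
        have := Finset.card_pos.mpr hne
        omega
      rcases auxSignConst Set.ordConnected_Ioo hcont2 hnv with hp | hn
      · -- g·q' ≥ 0 beyond z as well: keep q'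
        refine ⟨q', hq'0, hdeg'.trans Finset.card_erase_le, fun x hx =>
          Finset.mem_of_mem_erase (hroots' x hx), ?_⟩
        intro x hx
        rcases le_or_gt x z with hxz | hxz
        · exact hpos' x ⟨hx.1, hxz⟩
        · have hcl : ∀ y ∈ Set.Icc z b, 0 ≤ g y * q'.eval y := by
            refine auxNonnegClosure hzI.2 ?_ (fun y hy => (hp y hy).le)
            exact (hg.mono (Set.Icc_subset_Icc_left hzI.1.le)).mul
              (Polynomial.continuous q').continuousOn
          exact hcl x ⟨hxz.le, hx.2⟩
      · -- sign flips at z: add the factor -(X - z)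
        refine ⟨-((X - C z) * q'), ?_, ?_, ?_, ?_⟩
        · simp only [neg_ne_zero]
          exact mul_ne_zero (X_sub_C_ne_zero z) hq'0
        · rw [natDegree_neg, natDegree_mul (X_sub_C_ne_zero z) hq'0, natDegree_X_sub_C]
          omega
        · intro x hx
          simp only [eval_neg, eval_mul, eval_sub, eval_X, eval_C, neg_eq_zero,
            mul_eq_zero] at hx
          rcases hx with hx | hx
          · have : x = z := by linarith [sub_eq_zero.mp hx]
            exact this ▸ hzZ
          · exact Finset.mem_of_mem_erase (hroots' x hx)
        · intro x hx
          have heval : ∀ y : ℝ, g y * eval y (-((X - C z) * q')) =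
              (z - y) * (g y * q'.eval y) := by
            intro y; simp only [eval_neg, eval_mul, eval_sub, eval_X, eval_C]; ring
          rcases le_or_gt x z with hxz | hxz
          · rw [heval]
            exact mul_nonneg (by linarith) (hpos' x ⟨hx.1, hxz⟩)
          · have hcl : ∀ y ∈ Set.Icc z b, 0 ≤ g y * eval y (-((X - C z) * q')) := by
              refine auxNonnegClosure hzI.2 ?_ ?_
              · exact (hg.mono (Set.Icc_subset_Icc_left hzI.1.le)).mul
                  (Polynomial.continuous _).continuousOn
              · intro y hy
                rw [heval]
                have h1 : z - y < 0 := by linarith [hy.1]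
                exact (mul_pos_of_neg_of_neg h1 (hn y hy)).le
            exact hcl x ⟨hxz.le, hx.2⟩

/-- The (topological) support of a Borel measure on `ℝ`. -/
def measSupport (μ : Measure ℝ) : Set ℝ := {x | ∀ U ∈ nhds x, μ U ≠ 0}

/-- If `μ` is a finite positive measure on `[−1,1]` with infinite support and `g` is continuous
on `[−1,1]`, not identically zero on `supp μ`, and orthogonal to all polynomials of degree at
most `m` with respect to `μ`, then `g` has at least `m+1` distinct zeros in `(−1,1)`. -/
theorem orthogonal_function_has_zeros
    (μ : Measure ℝ) [IsFiniteMeasure μ] (hμsupp : μ (Set.Icc (-1 : ℝ) 1)ᶜ = 0)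
    (hμinf : (measSupport μ).Infinite)
    (m : ℕ) (g : ℝ → ℝ) (hg : ContinuousOn g (Set.Icc (-1 : ℝ) 1))
    (hgne : ∃ x ∈ measSupport μ, g x ≠ 0)
    (horth : ∀ q : Polynomial ℝ, q.natDegree ≤ m → ∫ x, g x * q.eval x ∂μ = 0) :
    ∃ s : Finset ℝ, m + 1 ≤ s.card ∧ ↑s ⊆ Set.Ioo (-1 : ℝ) 1 ∧ ∀ x ∈ s, g x = 0 := by
  by_contra hcon
  push_neg at hcon
  -- The zero set of g in (-1,1) is finite with at most m elements
  set Zset : Set ℝ := {x ∈ Set.Ioo (-1 : ℝ) 1 | g x = 0} with hZdef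
  have hfin : Zset.Finite := by
    by_contra hinf
    obtain ⟨t, ht, htc⟩ := Set.Infinite.exists_subset_card_eq hinf (m+1)
    obtain ⟨x, hx, hgx⟩ := hcon t (le_of_eq htc.symm) (fun y hy => (ht hy).1)
    exact hgx (ht hx).2
  have hcard : hfin.toFinset.card ≤ m := by
    by_contra hc
    push_neg at hc
    obtain ⟨x, hx, hgx⟩ := hcon hfin.toFinset hc
      (fun y hy => (hfin.mem_toFinset.mp hy).1)
    exact hgx (hfin.mem_toFinset.mp hx).2
  -- Construct the sign-correcting polynomial
  obtain ⟨q, hq0, hqdeg, hqroots, hqpos⟩ := auxExistsPoly g hfin.toFinset (-1) 1 hg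
    (fun x hx => (hfin.mem_toFinset.mp hx).1)
    (by
      intro x hx
      rw [Set.Finite.mem_toFinset]
      exact ⟨fun h => ⟨hx, h⟩, fun h => h.2⟩)
  have hint0 : ∫ x, g x * q.eval x ∂μ = 0 := horth q (hqdeg.trans hcard)
  -- a.e. membership in [-1,1]
  have haemem : ∀ᵐ x ∂μ, x ∈ Set.Icc (-1 : ℝ) 1 := by
    rw [MeasureTheory.ae_iff]
    have : {a : ℝ | ¬a ∈ Set.Icc (-1 : ℝ) 1} = (Set.Icc (-1 : ℝ) 1)ᶜ := rfl
    rw [this, hμsupp]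
  -- integrability
  have hcontf : ContinuousOn (fun x => g x * q.eval x) (Set.Icc (-1 : ℝ) 1) :=
    hg.mul (Polynomial.continuous q).continuousOn
  have hint : Integrable (fun x => g x * q.eval x) μ := by
    have h1 : IntegrableOn (fun x => g x * q.eval x) (Set.Icc (-1 : ℝ) 1) μ :=
      hcontf.integrableOn_compact isCompact_Icc
    rwa [IntegrableOn, Measure.restrict_eq_self_of_ae_mem haemem] at h1
  have hnonneg : 0 ≤ᵐ[μ] fun x => g x * q.eval x := by
    filter_upwards [haemem] with x hx
    exact hqpos x hx
  have hae0 : (fun x => g x * q.eval x) =ᵐ[μ] 0 :=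
    (integral_eq_zero_iff_of_nonneg_ae hnonneg hint).mp hint0
  have hnull : μ {x | g x * q.eval x ≠ 0} = 0 := by
    have := hae0
    rw [Filter.EventuallyEq, MeasureTheory.ae_iff] at this
    simpa using this
  -- support is contained in a finite set: contradiction
  have hsub : measSupport μ ⊆ Zset ∪ {x | q.IsRoot x} ∪ {(-1 : ℝ), 1} := by
    intro x hx
    have hxmem : ∀ U ∈ nhds x, μ U ≠ 0 := hx
    -- x ∈ [-1, 1]
    have hxI : x ∈ Set.Icc (-1 : ℝ) 1 := by
      by_contra hxI
      exact hxmem (Set.Icc (-1 : ℝ) 1)ᶜ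
        ((isClosed_Icc.isOpen_compl).mem_nhds hxI) hμsupp
    -- g x * q.eval x = 0
    have hfx : g x * q.eval x = 0 := by
      by_contra hfx
      have hct : Filter.Tendsto (fun y => g y * q.eval y)
          (nhdsWithin x (Set.Icc (-1 : ℝ) 1)) (nhds (g x * q.eval x)) := hcontf x hxI
      have hev : {y | g y * q.eval y ≠ 0} ∈ nhdsWithin x (Set.Icc (-1 : ℝ) 1) :=
        hct (isOpen_compl_singleton.mem_nhds hfx)
      rw [mem_nhdsWithin] at hev
      obtain ⟨U, hUopen, hxU, hUsub⟩ := hev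
      have : μ U = 0 := by
        have hUU : U ⊆ {y | g y * q.eval y ≠ 0} ∪ (Set.Icc (-1 : ℝ) 1)ᶜ := by
          intro y hy
          by_cases hyI : y ∈ Set.Icc (-1 : ℝ) 1
          · exact Or.inl (hUsub ⟨hy, hyI⟩)
          · exact Or.inr hyI
        refine le_antisymm ?_ zero_le
        calc μ U ≤ μ ({y | g y * q.eval y ≠ 0} ∪ (Set.Icc (-1 : ℝ) 1)ᶜ) := measure_mono hUU
          _ ≤ μ {y | g y * q.eval y ≠ 0} + μ (Set.Icc (-1 : ℝ) 1)ᶜ := measure_union_le _ _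
          _ = 0 := by rw [hnull, hμsupp, add_zero]
      exact hxmem U (hUopen.mem_nhds hxU) this
    rcases mul_eq_zero.mp hfx with hgx | hqx
    · by_cases hxO : x ∈ Set.Ioo (-1 : ℝ) 1
      · exact Or.inl (Or.inl ⟨hxO, hgx⟩)
      · right
        rcases hxI.1.eq_or_lt with h1 | h1
        · exact Or.inl h1.symm
        · rcases hxI.2.eq_or_lt with h2 | h2
          · exact Or.inr h2
          · exact absurd ⟨h1, h2⟩ hxO
    · exact Or.inl (Or.inr hqx)
  have hfinsub : (Zset ∪ {x | q.IsRoot x} ∪ {(-1 : ℝ), 1}).Finite :=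
    ((hfin.union (Polynomial.finite_setOf_isRoot hq0)).union
      ((Set.finite_singleton _).insert _))
  exact hμinf (hfinsub.subset hsub)
end

section
/- Let n ≥ 1, let Ω be a polynomial of degree 2n, and let f be holomorphic on an open set U ⊆ ℂ containing all zeros of Ω. Then there exist polynomials P of degree at most n−1 and Q of degree at most n, not both identically zero, and a holomorphic function h on U such that Q·f − P = Ω·h on U. -/
open Polynomial

/-- Iterated `dslope` along a list of points. -/
noncomputable def padeSweep : List ℂ → (ℂ → ℂ) → (ℂ → ℂ)
  | [], g => g
  | a :: l, g => padeSweep l (dslope g a)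

/-- The cascade of vanishing conditions for divisibility. -/
def padeVanishes : List ℂ → (ℂ → ℂ) → Prop
  | [], _ => True
  | a :: l, g => g a = 0 ∧ padeVanishes l (dslope g a)

lemma dslope_fun_add {g g' : ℂ → ℂ} {a : ℂ} (hg : DifferentiableAt ℂ g a)
    (hg' : DifferentiableAt ℂ g' a) :
    dslope (fun z => g z + g' z) a = fun z => dslope g a z + dslope g' a z := by
  funext z
  rcases eq_or_ne z a with rfl | hz
  · simp only [dslope_same]
    exact deriv_add hg hg'
  · simp only [dslope_of_ne _ hz, slope_def_field]
    ring

lemma dslope_fun_const_mul (c : ℂ) (g : ℂ → ℂ) (a : ℂ) :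
    dslope (fun z => c * g z) a = fun z => c * dslope g a z := by
  funext z
  rcases eq_or_ne z a with rfl | hz
  · simp only [dslope_same]
    exact deriv_const_mul_field c
  · simp only [dslope_of_ne _ hz, slope_def_field]
    ring

lemma padeSweep_differentiableOn {U : Set ℂ} (hU : IsOpen U) :
    ∀ (l : List ℂ), (∀ a ∈ l, a ∈ U) → ∀ g : ℂ → ℂ, DifferentiableOn ℂ g U →
      DifferentiableOn ℂ (padeSweep l g) U
  | [], _, g, hg => hg
  | a :: l, hl, g, hg => by
    have ha : a ∈ U := hl a List.mem_cons_self
    exact padeSweep_differentiableOn hU l (fun b hb => hl b (List.mem_cons_of_mem a hb)) _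
      ((Complex.differentiableOn_dslope (hU.mem_nhds ha)).mpr hg)

lemma padeSweep_add {U : Set ℂ} (hU : IsOpen U) :
    ∀ (l : List ℂ), (∀ a ∈ l, a ∈ U) → ∀ g g' : ℂ → ℂ, DifferentiableOn ℂ g U →
      DifferentiableOn ℂ g' U →
      padeSweep l (fun z => g z + g' z) = fun z => padeSweep l g z + padeSweep l g' z
  | [], _, g, g', _, _ => rfl
  | a :: l, hl, g, g', hg, hg' => by
    have ha : a ∈ U := hl a List.mem_cons_self
    have h1 : DifferentiableAt ℂ g a := hg.differentiableAt (hU.mem_nhds ha)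
    have h2 : DifferentiableAt ℂ g' a := hg'.differentiableAt (hU.mem_nhds ha)
    show padeSweep l (dslope (fun z => g z + g' z) a) = _
    rw [dslope_fun_add h1 h2]
    exact padeSweep_add hU l (fun b hb => hl b (List.mem_cons_of_mem a hb)) _ _
      ((Complex.differentiableOn_dslope (hU.mem_nhds ha)).mpr hg)
      ((Complex.differentiableOn_dslope (hU.mem_nhds ha)).mpr hg')

lemma padeSweep_const_mul :
    ∀ (l : List ℂ) (c : ℂ) (g : ℂ → ℂ),
      padeSweep l (fun z => c * g z) = fun z => c * padeSweep l g z
  | [], _, _ => rfl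
  | a :: l, c, g => by
    show padeSweep l (dslope (fun z => c * g z) a) = _
    rw [dslope_fun_const_mul]
    exact padeSweep_const_mul l c (dslope g a)

lemma padeSweep_factor :
    ∀ (l : List ℂ) (g : ℂ → ℂ), padeVanishes l g →
      ∀ z : ℂ, g z = (l.map (fun a => z - a)).prod * padeSweep l g z
  | [], g, _, z => (one_mul _).symm
  | a :: l, g, ⟨h0, hv⟩, z => by
    have key : g z = (z - a) * dslope g a z := by
      have h := sub_smul_dslope g a z
      rw [h0, sub_zero] at h
      simpa [smul_eq_mul] using h.symm
    calc g z = (z - a) * dslope g a z := key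
      _ = (z - a) * ((l.map (fun b => z - b)).prod * padeSweep l (dslope g a) z) := by
          rw [← padeSweep_factor l (dslope g a) hv z]
      _ = ((a :: l).map (fun b => z - b)).prod * padeSweep (a :: l) g z := by
          simp only [List.map_cons, List.prod_cons, padeSweep]
          ring

lemma padeVanishes_of_components :
    ∀ (l : List ℂ) (g : ℂ → ℂ),
      (∀ k : Fin l.length, padeSweep (l.take k) g (l.get k) = 0) → padeVanishes l g
  | [], _, _ => trivial
  | a :: l, g, h => by
    refine ⟨?_, padeVanishes_of_components l (dslope g a) fun k => ?_⟩
    · simpa [padeSweep] using h ⟨0, Nat.succ_pos _⟩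
    · simpa [padeSweep, List.take_succ_cons] using h ⟨k + 1, Nat.succ_lt_succ k.isLt⟩

/-- Existence of multipoint Padé interpolants: if `Ω` is a polynomial of degree `2n` and `f`
is holomorphic on an open set `U` containing all zeros of `Ω`, then there are polynomials
`P` of degree at most `n−1` and `Q` of degree at most `n`, not both zero, and a holomorphic
`h` on `U`, with `Q·f − P = Ω·h` on `U`. -/
theorem multipoint_pade_exists
    (n : ℕ) (hn : 1 ≤ n) (Ω : Polynomial ℂ) (hΩ : Ω.degree = (2 * n : ℕ))
    (U : Set ℂ) (hU : IsOpen U) (hroots : ∀ z : ℂ, Ω.IsRoot z → z ∈ U)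
    (f : ℂ → ℂ) (hf : DifferentiableOn ℂ f U) :
    ∃ (P Q : Polynomial ℂ) (h : ℂ → ℂ),
      P.natDegree ≤ n - 1 ∧ Q.natDegree ≤ n ∧ ¬(P = 0 ∧ Q = 0) ∧
      DifferentiableOn ℂ h U ∧
      ∀ z ∈ U, Q.eval z * f z - P.eval z = Ω.eval z * h z := by
  classical
  have hΩ0 : Ω ≠ 0 := by
    intro h
    rw [degree_eq_bot.mpr h] at hΩ
    exact WithBot.bot_ne_coe hΩ
  have hnd : Ω.natDegree = 2 * n := natDegree_eq_of_degree_eq_some hΩ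
  have hcard : Multiset.card Ω.roots = 2 * n := by
    rw [← hnd]
    exact splits_iff_card_roots.mp (IsAlgClosed.splits Ω)
  set L : List ℂ := Ω.roots.toList with hLdef
  have hLlen : L.length = 2 * n := by rw [hLdef, Multiset.length_toList, hcard]
  have hLU : ∀ a ∈ L, a ∈ U := by
    intro a ha
    apply hroots
    have haR : a ∈ Ω.roots := by rwa [← Multiset.mem_toList]
    exact ((mem_roots').mp haR).2
  -- The vector space of candidate pairs (P, Q)
  let gfun : (Polynomial.degreeLT ℂ n) × (Polynomial.degreeLT ℂ (n + 1)) → ℂ → ℂ := fun v z => (v.2 : ℂ[X]).eval z * f z - (v.1 : ℂ[X]).eval z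
  have hgdiff : ∀ v : (Polynomial.degreeLT ℂ n) × (Polynomial.degreeLT ℂ (n + 1)), DifferentiableOn ℂ (gfun v) U := fun v =>
    (((v.2 : ℂ[X]).differentiable.differentiableOn.mul hf).sub
      (v.1 : ℂ[X]).differentiable.differentiableOn)
  -- The linear map encoding the interpolation conditions
  let T : ((Polynomial.degreeLT ℂ n) × (Polynomial.degreeLT ℂ (n + 1))) →ₗ[ℂ] (Fin L.length → ℂ) :=
    { toFun := fun v k => padeSweep (L.take k) (gfun v) (L.get k)
      map_add' := by
        intro v w
        funext k
        have hgv : gfun (v + w) = fun z => gfun v z + gfun w z := by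
          funext z
          simp only [gfun, Prod.fst_add, Prod.snd_add, Submodule.coe_add, eval_add]
          ring
        show padeSweep (L.take k) (gfun (v + w)) (L.get k) =
          padeSweep (L.take k) (gfun v) (L.get k) + padeSweep (L.take k) (gfun w) (L.get k)
        rw [hgv, padeSweep_add hU (L.take k)
          (fun a ha => hLU a (List.take_subset _ _ ha)) _ _ (hgdiff v) (hgdiff w)]
      map_smul' := by
        intro c v
        funext k
        have hgv : gfun (c • v) = fun z => c * gfun v z := by
          funext z
          simp only [gfun, Prod.smul_fst, Prod.smul_snd, Submodule.coe_smul, eval_smul,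
            smul_eq_mul]
          ring
        show padeSweep (L.take k) (gfun (c • v)) (L.get k) =
          c * padeSweep (L.take k) (gfun v) (L.get k)
        rw [hgv, padeSweep_const_mul] }
  haveI : FiniteDimensional ℂ (Polynomial.degreeLT ℂ n) :=
    (Polynomial.degreeLTEquiv ℂ n).symm.finiteDimensional
  haveI : FiniteDimensional ℂ (Polynomial.degreeLT ℂ (n + 1)) :=
    (Polynomial.degreeLTEquiv ℂ (n + 1)).symm.finiteDimensional
  have hdim1 : Module.finrank ℂ (Polynomial.degreeLT ℂ n) = n := by
    rw [(Polynomial.degreeLTEquiv ℂ n).finrank_eq, Module.finrank_fin_fun]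
  have hdim2 : Module.finrank ℂ (Polynomial.degreeLT ℂ (n + 1)) = n + 1 := by
    rw [(Polynomial.degreeLTEquiv ℂ (n + 1)).finrank_eq, Module.finrank_fin_fun]
  have hdimV : Module.finrank ℂ
      ((Polynomial.degreeLT ℂ n) × (Polynomial.degreeLT ℂ (n + 1))) = 2 * n + 1 := by
    rw [Module.finrank_prod, hdim1, hdim2]
    ring
  -- Find a nonzero element of the kernel
  have hker : ∃ v : (Polynomial.degreeLT ℂ n) × (Polynomial.degreeLT ℂ (n + 1)),
      v ≠ 0 ∧ T v = 0 := by
    by_contra hcon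
    push_neg at hcon
    have hinj : Function.Injective T := by
      rw [← LinearMap.ker_eq_bot, Submodule.eq_bot_iff]
      intro v hv
      by_contra h0
      exact hcon v h0 (LinearMap.mem_ker.mp hv)
    have hle := LinearMap.finrank_le_finrank_of_injective hinj
    rw [hdimV, Module.finrank_fin_fun, hLlen] at hle
    omega
  obtain ⟨v, hv0, hTv⟩ := hker
  have hvan : padeVanishes L (gfun v) :=
    padeVanishes_of_components L _ (fun k => by exact congrFun hTv k)
  have hfac := padeSweep_factor L (gfun v) hvan
  have hlc : Ω.leadingCoeff ≠ 0 := leadingCoeff_ne_zero.mpr hΩ0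
  have hΩeval : ∀ z : ℂ, Ω.eval z = Ω.leadingCoeff * (L.map (fun a => z - a)).prod := by
    intro z
    conv_lhs => rw [← C_leadingCoeff_mul_prod_multiset_X_sub_C (hcard.trans hnd.symm)]
    rw [eval_mul, eval_C, eval_multiset_prod]
    congr 1
    conv_lhs => rw [← Ω.roots.coe_toList]
    rw [Multiset.map_coe, Multiset.map_coe, Multiset.prod_coe, List.map_map]
    simp [Function.comp_def, hLdef]
  refine ⟨(v.1 : ℂ[X]), (v.2 : ℂ[X]),
    fun z => Ω.leadingCoeff⁻¹ * padeSweep L (gfun v) z, ?_, ?_, ?_, ?_, ?_⟩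
  · rcases eq_or_ne (v.1 : ℂ[X]) 0 with h0 | h0
    · simp [h0]
    · have := (natDegree_lt_iff_degree_lt h0).mpr (Polynomial.mem_degreeLT.mp v.1.2)
      omega
  · rcases eq_or_ne (v.2 : ℂ[X]) 0 with h0 | h0
    · simp [h0]
    · have := (natDegree_lt_iff_degree_lt h0).mpr (Polynomial.mem_degreeLT.mp v.2.2)
      omega
  · rintro ⟨h1, h2⟩
    apply hv0
    apply Prod.ext
    · exact Subtype.ext h1
    · exact Subtype.ext h2
  · exact (padeSweep_differentiableOn hU L hLU _ (hgdiff v)).const_mul _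
  · intro z _
    show gfun v z = _
    rw [hfac z, hΩeval z]
    field_simp
end

section
/- Assume the support of μ is an infinite set and let σ be a finite positive Borel measure with infinite support contained in a segment [c,d] ⊂ ℝ∖Δ. If (P, Q) and (P', Q') are two linear Tschebyshev–Padé pairs of order n for the Markov function σ̂ with respect to μ, then P·Q' = P'·Q identically; that is, the linear Tschebyshev–Padé approximant Φ_n = P/Q to σ̂ is unique as a rational function. -/
open MeasureTheory Polynomial

lemma tp_aesm {μ : Measure ℝ} {V : Set ℝ} (hV : IsOpen V) (hμV : μ Vᶜ = 0) {h : ℝ → ℝ}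
    (hc : ContinuousOn h V) : AEStronglyMeasurable h μ := by
  have hae : ∀ᵐ x ∂μ, x ∈ V := by
    refine (MeasureTheory.ae_iff).2 ?_
    exact hμV
  have hres : μ.restrict V = μ := Measure.restrict_eq_self_of_ae_mem hae
  have := hc.aestronglyMeasurable hV.measurableSet (μ := μ)
  rwa [hres] at this

lemma tp_poly_bound (p : Polynomial ℝ) (a b : ℝ) : ∃ M : ℝ, ∀ x ∈ Set.Icc a b, |p.eval x| ≤ M := by
  obtain ⟨M, hM⟩ := isCompact_Icc.exists_bound_of_continuousOn (f := fun x => p.eval x)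
    (p.continuous_aeval).continuousOn
  exact ⟨M, fun x hx => by simpa using hM x hx⟩

lemma tp_supp_subset {ν : Measure ℝ} {S : Set ℝ} (hS : IsClosed S) (hν : ν Sᶜ = 0) :
    measSupport ν ⊆ S := by
  intro x hx
  by_contra hxS
  exact hx Sᶜ (hS.isOpen_compl.mem_nhds hxS) hν

/-- continuity of Markov-type transforms off the support. -/
lemma tp_cont_markov (ν : Measure ℝ) [IsFiniteMeasure ν] {K : Set ℝ} (hK : IsClosed K)
    (hν : ν Kᶜ = 0) (w : ℝ → ℝ) (hw : AEStronglyMeasurable w ν) {M : ℝ}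
    (hbd : ∀ᵐ t ∂ν, |w t| ≤ M) :
    ContinuousOn (fun y => ∫ t, w t * (y - t)⁻¹ ∂ν) Kᶜ := by
  have haeK : ∀ᵐ t ∂ν, t ∈ K := by
    refine (MeasureTheory.ae_iff).2 ?_
    exact hν
  intro y₀ hy₀
  apply ContinuousAt.continuousWithinAt
  obtain ⟨ε, hε, hball⟩ := Metric.isOpen_iff.1 hK.isOpen_compl y₀ hy₀
  refine continuousAt_of_dominated (bound := fun _ => M * (ε / 2)⁻¹)
      (F := fun y t => w t * (y - t)⁻¹) ?_ ?_ (integrable_const _) ?_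
  · filter_upwards [Metric.ball_mem_nhds y₀ hε] with y hy
    refine hw.mul (tp_aesm (isOpen_compl_singleton (x := y)) ?_ ?_)
    · exact measure_mono_null (by simpa using hball hy) hν
    · exact ((continuous_const.sub continuous_id).continuousOn).inv₀
        (fun t ht => sub_ne_zero.2 (Ne.symm ht))
  · filter_upwards [Metric.ball_mem_nhds y₀ (half_pos hε)] with y hy
    filter_upwards [haeK, hbd] with t htK hMt
    have hyt : ε / 2 ≤ |y - t| := by
      by_contra hlt
      push_neg at hlt
      have : t ∈ Metric.ball y₀ ε := by
        have htri := dist_triangle t y y₀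
        have h1 : dist t y < ε / 2 := by
          rw [Real.dist_eq, abs_sub_comm]; exact hlt
        have h2 : dist y y₀ < ε / 2 := by rwa [Metric.mem_ball] at hy
        rw [Metric.mem_ball]
        linarith
      exact hball this htK
    have h1 : |(y - t)⁻¹| ≤ (ε / 2)⁻¹ := by
      rw [abs_inv]
      exact inv_anti₀ (half_pos hε) hyt
    calc ‖w t * (y - t)⁻¹‖ = |w t| * |(y - t)⁻¹| := abs_mul _ _
      _ ≤ M * (ε / 2)⁻¹ := by
          apply mul_le_mul hMt h1 (abs_nonneg _) ((abs_nonneg (w t)).trans hMt)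
  · filter_upwards [haeK] with t htK
    have : y₀ ≠ t := fun h => hy₀ (h ▸ htK)
    exact (continuousAt_const.mul (((continuousAt_id.sub continuousAt_const)).inv₀
      (sub_ne_zero.2 this)))


lemma tp_const_sign {h : ℝ → ℝ} {S : Set ℝ} (hS : S.OrdConnected) (hc : ContinuousOn h S)
    (hnv : ∀ t ∈ S, h t ≠ 0) : ∀ u ∈ S, ∀ v ∈ S, 0 < h u * h v := by
  have key : ∀ u ∈ S, ∀ v ∈ S, u ≤ v → 0 < h u * h v := by
    intro u hu v hv huv
    have hsub : Set.Icc u v ⊆ S := hS.out hu hv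
    rcases (hnv u hu).lt_or_gt with hu0 | hu0 <;> rcases (hnv v hv).lt_or_gt with hv0 | hv0
    · exact mul_pos_of_neg_of_neg hu0 hv0
    · exfalso
      obtain ⟨w, hw, hw0⟩ := intermediate_value_Icc huv (hc.mono hsub) ⟨hu0.le, hv0.le⟩
      exact hnv w (hsub hw) hw0
    · exfalso
      obtain ⟨w, hw, hw0⟩ := intermediate_value_Icc' huv (hc.mono hsub) ⟨hv0.le, hu0.le⟩
      exact hnv w (hsub hw) hw0
    · exact mul_pos hu0 hv0
  intro u hu v hv
  rcases le_total u v with huv | huv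
  · exact key u hu v hv huv
  · rw [mul_comm]; exact key v hv u hu huv

lemma tp_sign_lemma (g : ℝ → ℝ) (a : ℝ) :
    ∀ (k : ℕ) (b : ℝ), ContinuousOn g (Set.Ico a b) →
      {t ∈ Set.Ico a b | g t = 0}.Finite → {t ∈ Set.Ico a b | g t = 0}.ncard ≤ k →
      ∃ s : Polynomial ℝ, s.natDegree ≤ k ∧ (∀ t ∈ Set.Ico a b, 0 ≤ g t * s.eval t) ∧
        (∀ x : ℝ, s.eval x = 0 → x ∈ Set.Ico a b ∧ g x = 0) := by
  intro k
  induction k with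
  | zero =>
    intro b hcont hfin hcard
    have hZ : {t ∈ Set.Ico a b | g t = 0} = ∅ := (Set.ncard_eq_zero hfin).1 (le_zero_iff.1 hcard)
    have hnv : ∀ t ∈ Set.Ico a b, g t ≠ 0 := by
      intro t ht hg
      have : t ∈ {t ∈ Set.Ico a b | g t = 0} := ⟨ht, hg⟩
      rw [hZ] at this; exact this
    by_cases hab : a < b
    · have haI : a ∈ Set.Ico a b := ⟨le_refl a, hab⟩
      rcases (hnv a haI).lt_or_gt with hga | hga
      · refine ⟨Polynomial.C (-1), by simp, ?_, ?_⟩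
        · intro t ht
          have := tp_const_sign Set.ordConnected_Ico hcont hnv t ht a haI
          have hgt : g t < 0 := by nlinarith
          simp only [Polynomial.eval_C]
          nlinarith
        · intro x hx; simp at hx
      · refine ⟨Polynomial.C 1, by simp, ?_, ?_⟩
        · intro t ht
          have := tp_const_sign Set.ordConnected_Ico hcont hnv t ht a haI
          have hgt : 0 < g t := by nlinarith
          simp only [Polynomial.eval_C]
          nlinarith
        · intro x hx; simp at hx
    · refine ⟨Polynomial.C 1, by simp, ?_, ?_⟩
      · intro t ht
        rw [Set.Ico_eq_empty hab] at ht
        exact absurd ht (Set.notMem_empty t)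
      · intro x hx; simp at hx
  | succ k IH =>
    intro b hcont hfin hcard
    by_cases hk : {t ∈ Set.Ico a b | g t = 0}.ncard ≤ k
    · obtain ⟨s, h1, h2, h3⟩ := IH b hcont hfin hk
      exact ⟨s, h1.trans (Nat.le_succ _), h2, h3⟩
    · set Z := {t ∈ Set.Ico a b | g t = 0} with hZdef
      have hne : Z.Nonempty := by
        rcases Z.eq_empty_or_nonempty with h | h
        · exfalso; apply hk; rw [h]; simp
        · exact h
      have hneF : hfin.toFinset.Nonempty := by rwa [Set.Finite.toFinset_nonempty]
      set z := hfin.toFinset.max' hneF with hzdef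
      have hzZ : z ∈ Z := by
        have := hfin.toFinset.max'_mem hneF
        rwa [Set.Finite.mem_toFinset] at this
      have hzmax : ∀ y ∈ Z, y ≤ z := by
        intro y hy
        exact hfin.toFinset.le_max' y (by rwa [Set.Finite.mem_toFinset])
      have hzab : z ∈ Set.Ico a b := hzZ.1
      have hzb : z < b := hzab.2
      have haz : a ≤ z := hzab.1
      have hZ' : {t ∈ Set.Ico a z | g t = 0} = Z \ {z} := by
        ext t
        constructor
        · rintro ⟨⟨hta, htz⟩, hg⟩
          exact ⟨⟨⟨hta, htz.trans hzb⟩, hg⟩, fun h => absurd (Set.mem_singleton_iff.1 h ▸ htz) (lt_irrefl z)⟩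
        · rintro ⟨⟨⟨hta, htb⟩, hg⟩, htne⟩
          have : t ≠ z := by simpa using htne
          exact ⟨⟨hta, lt_of_le_of_ne (hzmax t ⟨⟨hta, htb⟩, hg⟩) this⟩, hg⟩
      have hfin' : {t ∈ Set.Ico a z | g t = 0}.Finite := by
        rw [hZ']; exact hfin.diff
      have hcard1 : Z.ncard = k + 1 := le_antisymm hcard (by omega)
      have hcard' : {t ∈ Set.Ico a z | g t = 0}.ncard ≤ k := by
        rw [hZ', Set.ncard_diff_singleton_of_mem hzZ, hcard1]; omega
      obtain ⟨s₀, hdeg₀, hpos₀, hroot₀⟩ := IH z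
        (hcont.mono (Set.Ico_subset_Ico le_rfl hzb.le)) hfin' hcard'
      set t₀ := (z + b) / 2 with ht₀def
      have ht₀ : t₀ ∈ Set.Ioo z b := ⟨by simp only [ht₀def]; linarith, by simp only [ht₀def]; linarith⟩
      set h := fun t => g t * s₀.eval t with hhdef
      have hIooSub : Set.Ioo z b ⊆ Set.Ico a b :=
        fun t ht => ⟨haz.trans ht.1.le, ht.2⟩
      have hIoonv : ∀ t ∈ Set.Ioo z b, h t ≠ 0 := by
        intro t ht h0
        rcases mul_eq_zero.1 h0 with h0 | h0
        · have : t ∈ Z := ⟨hIooSub ht, h0⟩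
          exact absurd (hzmax t this) (not_le.2 ht.1)
        · have := (hroot₀ t h0).1.2
          exact absurd (this.trans ht.1) (lt_irrefl t)
      have hhcont : ContinuousOn h (Set.Ioo z b) :=
        ((hcont.mono hIooSub).mul (s₀.continuous_aeval.continuousOn))
      have hsign := tp_const_sign Set.ordConnected_Ioo hhcont hIoonv
      have ht₀ne : h t₀ ≠ 0 := hIoonv t₀ ht₀
      rcases ht₀ne.lt_or_gt with hneg | hpos
      · -- sign is negative on (z,b): flip with (z - X)
        refine ⟨s₀ * (Polynomial.C z - Polynomial.X), ?_, ?_, ?_⟩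
        · refine (Polynomial.natDegree_mul_le).trans ?_
          have : (Polynomial.C z - Polynomial.X : Polynomial ℝ).natDegree = 1 := by
            have : (Polynomial.C z - Polynomial.X : Polynomial ℝ) = -(Polynomial.X - Polynomial.C z) := by ring
            rw [this, Polynomial.natDegree_neg, Polynomial.natDegree_X_sub_C]
          omega
        · intro t ht
          simp only [Polynomial.eval_mul, Polynomial.eval_sub, Polynomial.eval_C, Polynomial.eval_X]
          rcases lt_trichotomy t z with hlt | heq | hgt
          · have h1 := hpos₀ t ⟨ht.1, hlt⟩
            nlinarith
          · rw [heq, hzZ.2]; simp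
          · have := hsign t ⟨hgt, ht.2⟩ t₀ ht₀
            have hht : h t < 0 := by nlinarith
            have : g t * s₀.eval t < 0 := hht
            nlinarith
        · intro x hx
          simp only [Polynomial.eval_mul, Polynomial.eval_sub, Polynomial.eval_C, Polynomial.eval_X] at hx
          rcases mul_eq_zero.1 hx with h0 | h0
          · obtain ⟨⟨h1, h2⟩, h3⟩ := hroot₀ x h0
            exact ⟨⟨h1, h2.trans hzb⟩, h3⟩
          · have : x = z := by linarith [sub_eq_zero.1 h0]
            rw [this]; exact ⟨hzab, hzZ.2⟩
      · -- sign is positive on (z,b): keep s₀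
        refine ⟨s₀, hdeg₀.trans (Nat.le_succ _), ?_, ?_⟩
        · intro t ht
          rcases lt_trichotomy t z with hlt | heq | hgt
          · exact hpos₀ t ⟨ht.1, hlt⟩
          · rw [heq, hzZ.2]; simp
          · have := hsign t ⟨hgt, ht.2⟩ t₀ ht₀
            have : 0 < h t := by nlinarith
            exact this.le
        · intro x hx
          obtain ⟨⟨h1, h2⟩, h3⟩ := hroot₀ x hx
          exact ⟨⟨h1, h2.trans hzb⟩, h3⟩

lemma tp_aesm_prod {μ : Measure (ℝ × ℝ)} {V : Set (ℝ × ℝ)} (hV : IsOpen V) (hμV : μ Vᶜ = 0)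
    {h : ℝ × ℝ → ℝ} (hc : ContinuousOn h V) : AEStronglyMeasurable h μ := by
  have hae : ∀ᵐ x ∂μ, x ∈ V := by
    refine (MeasureTheory.ae_iff).2 ?_
    exact hμV
  have hres : μ.restrict V = μ := Measure.restrict_eq_self_of_ae_mem hae
  have := hc.aestronglyMeasurable hV.measurableSet (μ := μ)
  rwa [hres] at this

set_option maxHeartbeats 2000000 in
/-- Uniqueness of the linear Tschebyshev–Padé approximant to a Markov function: if `μ` has
infinite support in `Δ = [−1,1]`, `σ` is a finite positive measure with infinite support
contained in `[c,d] ⊂ ℝ∖Δ`, and `(P, Q)`, `(P', Q')` are two linear Tschebyshev–Padé pairs of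
order `n` for `σ̂` with respect to `μ`, then `P·Q' = P'·Q` identically. -/
theorem tschebyshev_pade_unique_for_markov
    (μ : Measure ℝ) [IsFiniteMeasure μ] (hμsupp : μ (Set.Icc (-1 : ℝ) 1)ᶜ = 0)
    (hμinf : (measSupport μ).Infinite)
    (T : ℕ → Polynomial ℝ)
    (hTdeg : ∀ k, (T k).degree = k)
    (hTlead : ∀ k, 0 < (T k).leadingCoeff)
    (hTorth : ∀ j k, ∫ x, (T j).eval x * (T k).eval x ∂μ = if j = k then 1 else 0)
    (c d : ℝ) (hcd : c ≤ d) (hdisj : Set.Icc c d ∩ Set.Icc (-1 : ℝ) 1 = ∅)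
    (σ : Measure ℝ) [IsFiniteMeasure σ] (hσsupp : σ (Set.Icc c d)ᶜ = 0)
    (hσinf : (measSupport σ).Infinite)
    (n : ℕ) (P Q P' Q' : Polynomial ℝ)
    (hP : P.natDegree ≤ n) (hQ : Q.natDegree ≤ n) (hQ0 : Q ≠ 0)
    (hTP : ∀ k ≤ 2 * n,
      ∫ x : ℝ, (Q.eval x * (∫ t : ℝ, (x - t)⁻¹ ∂σ) - P.eval x) * (T k).eval x ∂μ = 0)
    (hP' : P'.natDegree ≤ n) (hQ' : Q'.natDegree ≤ n) (hQ'0 : Q' ≠ 0)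
    (hTP' : ∀ k ≤ 2 * n,
      ∫ x : ℝ, (Q'.eval x * (∫ t : ℝ, (x - t)⁻¹ ∂σ) - P'.eval x) * (T k).eval x ∂μ = 0) :
    P * Q' = P' * Q := by
  classical
  set f : ℝ → ℝ := fun x => ∫ t : ℝ, (x - t)⁻¹ ∂σ with hfdef
  have hμae : ∀ᵐ x ∂μ, x ∈ Set.Icc (-1:ℝ) 1 := (MeasureTheory.ae_iff).2 hμsupp
  have hσae : ∀ᵐ t ∂σ, t ∈ Set.Icc c d := (MeasureTheory.ae_iff).2 hσsupp
  have hside : 1 < c ∨ d < -1 := by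
    by_contra hcon
    push_neg at hcon
    obtain ⟨h1, h2⟩ := hcon
    have : max c (-1) ∈ Set.Icc c d ∩ Set.Icc (-1:ℝ) 1 :=
      ⟨⟨le_max_left _ _, max_le hcd h2⟩, ⟨le_max_right _ _, max_le h1 (by norm_num)⟩⟩
    rw [hdisj] at this
    exact this
  obtain ⟨b, ee, δ, hδ, hee, hdb, hsep⟩ :
      ∃ (b ee δ : ℝ), 0 < δ ∧ (ee = 1 ∨ ee = -1) ∧ d < b ∧
        ∀ x ∈ Set.Icc (-1:ℝ) 1, ∀ t ∈ Set.Ico c b, δ ≤ ee * (t - x) := by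
    rcases hside with h | h
    · refine ⟨d+1, 1, c-1, by linarith, Or.inl rfl, by linarith, ?_⟩
      rintro x ⟨_, hx2⟩ t ⟨ht1, _⟩
      nlinarith
    · refine ⟨(d-1)/2, -1, (-1-d)/2, by linarith, Or.inr rfl, by linarith, ?_⟩
      rintro x ⟨hx1, _⟩ t ⟨_, ht2⟩
      nlinarith
  obtain ⟨A, B, hA, hB, hΔA, hcdB, hAB⟩ :
      ∃ A B : Set ℝ, IsOpen A ∧ IsOpen B ∧ Set.Icc (-1:ℝ) 1 ⊆ A ∧ Set.Icc c d ⊆ B ∧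
        ∀ x ∈ A, ∀ t ∈ B, x ≠ t := by
    rcases hside with h | h
    · refine ⟨Set.Iio ((1+c)/2), Set.Ioi ((1+c)/2), isOpen_Iio, isOpen_Ioi, ?_, ?_, ?_⟩
      · rintro x ⟨_, hx2⟩; simp only [Set.mem_Iio]; linarith
      · rintro t ⟨ht1, _⟩; simp only [Set.mem_Ioi]; linarith
      · intro x hx t ht
        simp only [Set.mem_Iio, Set.mem_Ioi] at hx ht
        exact ne_of_lt (hx.trans ht)
    · refine ⟨Set.Ioi ((d-1)/2), Set.Iio ((d-1)/2), isOpen_Ioi, isOpen_Iio, ?_, ?_, ?_⟩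
      · rintro x ⟨hx1, _⟩; simp only [Set.mem_Ioi]; linarith
      · rintro t ⟨_, ht2⟩; simp only [Set.mem_Iio]; linarith
      · intro x hx t ht
        simp only [Set.mem_Iio, Set.mem_Ioi] at hx ht
        exact (ne_of_lt (ht.trans hx)).symm
  have hIcoIcc : Set.Icc c d ⊆ Set.Ico c b := fun t ht => ⟨ht.1, lt_of_le_of_lt ht.2 hdb⟩
  have hdist : ∀ x ∈ Set.Icc (-1:ℝ) 1, ∀ t ∈ Set.Ico c b, δ ≤ |x - t| := by
    intro x hx t ht
    have h1 := hsep x hx t ht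
    rcases hee with h | h <;> rw [h] at h1
    · rw [abs_sub_comm]
      calc δ ≤ t - x := by linarith
        _ ≤ |t - x| := le_abs_self _
    · calc δ ≤ x - t := by linarith
        _ ≤ |x - t| := le_abs_self _
  have hne_xt : ∀ x ∈ Set.Icc (-1:ℝ) 1, ∀ t ∈ Set.Ico c b, x ≠ t := by
    intro x hx t ht h
    have := hdist x hx t ht
    rw [h, sub_self, abs_zero] at this
    linarith
  have hinvbd : ∀ x ∈ Set.Icc (-1:ℝ) 1, ∀ t ∈ Set.Ico c b, |(x - t)⁻¹| ≤ δ⁻¹ := by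
    intro x hx t ht
    rw [abs_inv]
    exact inv_anti₀ hδ (hdist x hx t ht)
  have hIcoΔ : ∀ t ∈ Set.Ico c b, t ∉ Set.Icc (-1:ℝ) 1 := by
    intro t ht htΔ
    exact hne_xt t htΔ t ht rfl
  have hcdΔc : Set.Icc c d ⊆ (Set.Icc (-1:ℝ) 1)ᶜ := by
    intro t ht htΔ
    exact hIcoΔ t (hIcoIcc ht) htΔ
  have hμcd : μ (Set.Icc c d) = 0 := measure_mono_null hcdΔc hμsupp
  have hσΔ : σ (Set.Icc (-1:ℝ) 1) = 0 := by
    refine measure_mono_null ?_ hσsupp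
    intro x hx hxcd
    exact hIcoΔ x (hIcoIcc hxcd) hx
  -- continuity and bounds for f
  have hfcont : ContinuousOn f (Set.Icc c d)ᶜ := by
    have h := tp_cont_markov σ isClosed_Icc hσsupp (fun _ => 1) aestronglyMeasurable_const
      (M := 1) (Filter.Eventually.of_forall (by norm_num))
    refine h.congr fun y _ => ?_
    simp [hfdef]
  have hfm : AEStronglyMeasurable f μ := by
    refine tp_aesm isClosed_Icc.isOpen_compl ?_ hfcont
    rwa [compl_compl]
  set Bf : ℝ := δ⁻¹ * (σ Set.univ).toReal with hBfdef
  have hfbd : ∀ᵐ x ∂μ, |f x| ≤ Bf := by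
    filter_upwards [hμae] with x hx
    have h : ‖∫ t : ℝ, (x - t)⁻¹ ∂σ‖ ≤ δ⁻¹ * (σ Set.univ).toReal := by
      refine norm_integral_le_of_norm_le_const ?_
      filter_upwards [hσae] with t ht
      rw [Real.norm_eq_abs]
      exact hinvbd x hx t (hIcoIcc ht)
    simpa [hfdef] using h
  -- integrability lemmas
  have IntP : ∀ p : Polynomial ℝ, Integrable (fun x => p.eval x) μ := by
    intro p
    obtain ⟨M, hM⟩ := tp_poly_bound p (-1) 1
    refine (integrable_const M).mono' (p.continuous_aeval.aestronglyMeasurable) ?_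
    filter_upwards [hμae] with x hx
    rw [Real.norm_eq_abs]
    exact hM x hx
  have IntPf : ∀ p : Polynomial ℝ, Integrable (fun x => p.eval x * f x) μ := by
    intro p
    obtain ⟨M, hM⟩ := tp_poly_bound p (-1) 1
    refine (integrable_const (M * Bf)).mono' (p.continuous_aeval.aestronglyMeasurable.mul hfm) ?_
    filter_upwards [hμae, hfbd] with x hx hfx
    rw [Real.norm_eq_abs, abs_mul]
    have h1 := hM x hx
    have h2 : (0:ℝ) ≤ |f x| := abs_nonneg _
    have h4 : (0:ℝ) ≤ M := le_trans (abs_nonneg _) (hM (-1) (by norm_num))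
    exact mul_le_mul h1 hfx h2 h4
  have IntPK : ∀ (p : Polynomial ℝ) (F : Finset ℝ), ↑F ⊆ Set.Ico c b →
      Integrable (fun x => p.eval x * (∏ τ ∈ F, (x - τ))⁻¹) μ := by
    intro p F hF
    obtain ⟨M, hM⟩ := tp_poly_bound p (-1) 1
    have hFμ : μ (↑F : Set ℝ) = 0 := by
      refine measure_mono_null ?_ hμsupp
      intro τ hτ
      exact hIcoΔ τ (hF hτ)
    have haesm : AEStronglyMeasurable (fun x => (∏ τ ∈ F, (x - τ))⁻¹) μ := by
      refine tp_aesm (F.finite_toSet.isClosed.isOpen_compl) (by rwa [compl_compl]) ?_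
      refine ContinuousOn.inv₀ (Continuous.continuousOn ?_) ?_
      · exact continuous_finset_prod F (fun τ _ => continuous_id.sub continuous_const)
      · intro x hx
        refine Finset.prod_ne_zero_iff.2 fun τ hτ => sub_ne_zero.2 fun h => ?_
        exact hx (by rw [h]; exact hτ)
    refine (integrable_const (M * (δ ^ F.card)⁻¹)).mono'
      (p.continuous_aeval.aestronglyMeasurable.mul haesm) ?_
    filter_upwards [hμae] with x hx
    rw [Real.norm_eq_abs, abs_mul]
    have h1 : |(∏ τ ∈ F, (x - τ))⁻¹| ≤ (δ ^ F.card)⁻¹ := by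
      rw [abs_inv, Finset.abs_prod]
      refine inv_anti₀ (pow_pos hδ _) ?_
      calc δ ^ F.card = ∏ _τ ∈ F, δ := by rw [Finset.prod_const]
        _ ≤ ∏ τ ∈ F, |x - τ| :=
          Finset.prod_le_prod (fun _ _ => hδ.le) (fun τ hτ => hdist x hx τ (hF hτ))
    have h2 := hM x hx
    have h3 : (0:ℝ) ≤ |(∏ τ ∈ F, (x - τ))⁻¹| := abs_nonneg _
    have h4 : (0:ℝ) ≤ M := le_trans (abs_nonneg _) (hM (-1) (by norm_num))
    exact mul_le_mul h2 h1 h3 h4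
  -- helper integrable variants
  have IntPP : ∀ p q : Polynomial ℝ, Integrable (fun x => p.eval x * q.eval x) μ := by
    intro p q
    refine (IntP (p*q)).congr (Filter.Eventually.of_forall fun x => ?_)
    simp [Polynomial.eval_mul]
  have IntPPK : ∀ (p q : Polynomial ℝ) (F : Finset ℝ), ↑F ⊆ Set.Ico c b →
      Integrable (fun x => p.eval x * q.eval x * (∏ τ ∈ F, (x - τ))⁻¹) μ := by
    intro p q F hF
    refine (IntPK (p*q) F hF).congr (Filter.Eventually.of_forall fun x => ?_)
    simp [Polynomial.eval_mul]
  have IntK1 : ∀ (p : Polynomial ℝ) (t : ℝ), t ∈ Set.Ico c b →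
      Integrable (fun x => p.eval x * (x - t)⁻¹) μ := by
    intro p t ht
    refine (IntPK p {t} (by simpa using ht)).congr (Filter.Eventually.of_forall fun x => ?_)
    simp
  -- degrees of T
  have hT0 : ∀ k, (T k).natDegree = k := fun k => natDegree_eq_of_degree_eq_some (hTdeg k)
  have hTne : ∀ k, T k ≠ 0 := by
    intro k h
    have := hTdeg k
    rw [h, Polynomial.degree_zero] at this
    exact (by simp at this)
  -- generic orthogonality upgrade
  have eOrth : ∀ (E : ℝ → ℝ), (∀ p : Polynomial ℝ, Integrable (fun x => E x * p.eval x) μ) →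
      (∀ k, k ≤ 2*n → ∫ x, E x * (T k).eval x ∂μ = 0) →
      ∀ p : Polynomial ℝ, p.natDegree ≤ 2*n → ∫ x, E x * p.eval x ∂μ = 0 := by
    intro E hEint hE0
    have main : ∀ m : ℕ, m ≤ 2*n → ∀ p : Polynomial ℝ, p.natDegree ≤ m →
        ∫ x, E x * p.eval x ∂μ = 0 := by
      intro m
      induction m with
      | zero =>
        intro _ p hp
        have hT0C : T 0 = Polynomial.C ((T 0).coeff 0) := Polynomial.eq_C_of_natDegree_le_zero (by rw [hT0 0])
        have ht0ne : (T 0).coeff 0 ≠ 0 := by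
          intro h
          apply hTne 0
          rw [hT0C, h, map_zero]
        have hpC : p = Polynomial.C (p.coeff 0) := Polynomial.eq_C_of_natDegree_le_zero hp
        have hptw : ∀ x, E x * p.eval x = (p.coeff 0 / (T 0).coeff 0) * (E x * (T 0).eval x) := by
          intro x
          rw [hpC]
          nth_rewrite 2 [hT0C]
          simp only [Polynomial.eval_C]
          field_simp
          simp
        rw [show (fun x => E x * p.eval x) = fun x => (p.coeff 0 / (T 0).coeff 0) * (E x * (T 0).eval x) from funext hptw]
        rw [MeasureTheory.integral_const_mul, hE0 0 (by omega), mul_zero]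
      | succ m IH =>
        intro hm p hp
        have hℓ : (T (m+1)).leadingCoeff ≠ 0 := (hTlead (m+1)).ne'
        set cc := p.coeff (m+1) / (T (m+1)).leadingCoeff with hccdef
        set p' := p - Polynomial.C cc * T (m+1) with hp'def
        have hTc : (T (m+1)).coeff (m+1) = (T (m+1)).leadingCoeff := by
          rw [Polynomial.leadingCoeff, hT0 (m+1)]
        have hp' : p'.natDegree ≤ m := by
          rw [Polynomial.natDegree_le_iff_coeff_eq_zero]
          intro N hN
          rw [hp'def, Polynomial.coeff_sub, Polynomial.coeff_C_mul]
          rcases eq_or_lt_of_le (Nat.succ_le_of_lt hN) with hNe | hNl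
          · rw [← hNe, hTc, hccdef]
            field_simp
            simp
          · have h1 : p.coeff N = 0 := Polynomial.coeff_eq_zero_of_natDegree_lt (lt_of_le_of_lt hp hNl)
            have h2 : (T (m+1)).coeff N = 0 := Polynomial.coeff_eq_zero_of_natDegree_lt (by rw [hT0 (m+1)]; omega)
            rw [h1, h2, mul_zero, sub_zero]
        have hsplit : ∀ x, E x * p.eval x = E x * p'.eval x + cc * (E x * (T (m+1)).eval x) := by
          intro x
          simp only [hp'def, Polynomial.eval_sub, Polynomial.eval_mul, Polynomial.eval_C]
          ring
        rw [show (fun x => E x * p.eval x) = fun x => E x * p'.eval x + cc * (E x * (T (m+1)).eval x) from funext hsplit]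
        rw [MeasureTheory.integral_add (hEint p') (((hEint (T (m+1)))).const_mul cc)]
        rw [MeasureTheory.integral_const_mul, IH (by omega) p' hp', hE0 (m+1) (by omega), mul_zero, add_zero]
    intro p hp
    exact main (2*n) le_rfl p hp
  have eInt : ∀ (A' B' p : Polynomial ℝ),
      Integrable (fun x => (A'.eval x * f x - B'.eval x) * p.eval x) μ := by
    intro A' B' p
    have : (fun x => (A'.eval x * f x - B'.eval x) * p.eval x)
        = fun x => (A'*p).eval x * f x - (B'*p).eval x := by
      funext x
      simp only [Polynomial.eval_mul]
      ring
    rw [this]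
    exact (IntPf (A'*p)).sub (IntP (B'*p))
  have he : ∀ p : Polynomial ℝ, p.natDegree ≤ 2*n →
      ∫ x, (Q.eval x * f x - P.eval x) * p.eval x ∂μ = 0 :=
    eOrth _ (eInt Q P) (fun k hk => hTP k hk)
  have he' : ∀ p : Polynomial ℝ, p.natDegree ≤ 2*n →
      ∫ x, (Q'.eval x * f x - P'.eval x) * p.eval x ∂μ = 0 :=
    eOrth _ (eInt Q' P') (fun k hk => hTP' k hk)
  -- the difference polynomial
  set R := P * Q' - P' * Q with hRdef
  have hRdeg : R.natDegree ≤ 2*n := by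
    refine (Polynomial.natDegree_sub_le _ _).trans (max_le ?_ ?_)
    · exact (Polynomial.natDegree_mul_le).trans (by omega)
    · exact (Polynomial.natDegree_mul_le).trans (by omega)
  have fact1 : ∀ s : Polynomial ℝ, s.natDegree ≤ n → ∫ x, R.eval x * s.eval x ∂μ = 0 := by
    intro s hs
    have hptw : ∀ x, R.eval x * s.eval x =
        (Q'.eval x * f x - P'.eval x) * (Q*s).eval x - (Q.eval x * f x - P.eval x) * (Q'*s).eval x := by
      intro x
      simp only [hRdef, Polynomial.eval_mul, Polynomial.eval_sub]
      ring
    rw [show (fun x => R.eval x * s.eval x) = _ from funext hptw]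
    rw [MeasureTheory.integral_sub (eInt Q' P' (Q*s)) (eInt Q P (Q'*s))]
    rw [he' (Q*s) ((Polynomial.natDegree_mul_le).trans (by omega)),
      he (Q'*s) ((Polynomial.natDegree_mul_le).trans (by omega)), sub_zero]
  have fact2 : ∀ s : Polynomial ℝ, s.natDegree ≤ n → ∫ x, R.eval x * s.eval x * f x ∂μ = 0 := by
    intro s hs
    have hptw : ∀ x, R.eval x * s.eval x * f x =
        (Q'.eval x * f x - P'.eval x) * (P*s).eval x - (Q.eval x * f x - P.eval x) * (P'*s).eval x := by
      intro x
      simp only [hRdef, Polynomial.eval_mul, Polynomial.eval_sub]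
      ring
    rw [show (fun x => R.eval x * s.eval x * f x) = _ from funext hptw]
    rw [MeasureTheory.integral_sub (eInt Q' P' (P*s)) (eInt Q P (P'*s))]
    rw [he' (P*s) ((Polynomial.natDegree_mul_le).trans (by omega)),
      he (P'*s) ((Polynomial.natDegree_mul_le).trans (by omega)), sub_zero]
  -- the second-kind function g
  set g : ℝ → ℝ := fun t => ∫ x, R.eval x * (x - t)⁻¹ ∂μ with hgdef
  obtain ⟨MR, hMR⟩ := tp_poly_bound R (-1) 1
  have hgbd : ∀ t ∈ Set.Ico c b, |g t| ≤ MR * δ⁻¹ * (μ Set.univ).toReal := by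
    intro t ht
    have h : ‖∫ x, R.eval x * (x - t)⁻¹ ∂μ‖ ≤ MR * δ⁻¹ * (μ Set.univ).toReal := by
      refine norm_integral_le_of_norm_le_const ?_
      filter_upwards [hμae] with x hx
      rw [Real.norm_eq_abs, abs_mul]
      have h1 := hMR x hx
      have h2 := hinvbd x hx t ht
      have h3 : (0:ℝ) ≤ MR := le_trans (abs_nonneg _) (hMR (-1) (by norm_num))
      exact mul_le_mul h1 h2 (abs_nonneg _) h3
    simpa [hgdef] using h
  have hgcont : ContinuousOn g (Set.Icc (-1:ℝ) 1)ᶜ := by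
    have h := tp_cont_markov μ isClosed_Icc hμsupp (fun x => R.eval x)
      (R.continuous_aeval.aestronglyMeasurable) (M := MR)
      (by filter_upwards [hμae] with x hx; exact hMR x hx)
    have hgneg : g = fun t => -∫ x, R.eval x * (t - x)⁻¹ ∂μ := by
      refine funext fun t => ?_
      show (∫ x, R.eval x * (x - t)⁻¹ ∂μ) = -∫ x, R.eval x * (t - x)⁻¹ ∂μ
      rw [← MeasureTheory.integral_neg]
      refine integral_congr_ae (Filter.Eventually.of_forall fun x => ?_)
      show eval x R * (x - t)⁻¹ = -(eval x R * (t - x)⁻¹)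
      rw [show (x - t) = -(t - x) by ring, inv_neg]
      ring
    rw [hgneg]
    exact h.neg
  -- Fubini: orthogonality of g against polynomials of degree ≤ n w.r.t. σ
  have fact3 : ∀ s : Polynomial ℝ, s.natDegree ≤ n → ∫ t, s.eval t * g t ∂σ = 0 := by
    intro s hs
    obtain ⟨Ms, hMs⟩ := tp_poly_bound (R * s) (-1) 1
    have haeprod : ∀ᵐ p ∂(μ.prod σ), p.1 ∈ Set.Icc (-1:ℝ) 1 ∧ p.2 ∈ Set.Icc c d := by
      refine (MeasureTheory.ae_iff).2 ?_
      have hU : (μ.prod σ) (((Set.Icc (-1:ℝ) 1)ᶜ ×ˢ (Set.univ : Set ℝ)) ∪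
          ((Set.univ : Set ℝ) ×ˢ (Set.Icc c d)ᶜ)) = 0 :=
        measure_union_null (by rw [Measure.prod_prod, hμsupp, zero_mul])
          (by rw [Measure.prod_prod, hσsupp, mul_zero])
      refine measure_mono_null (fun p hp => ?_) hU
      simp only [Set.mem_setOf_eq, not_and_or] at hp
      rcases hp with hp | hp
      · exact Or.inl ⟨hp, Set.mem_univ _⟩
      · exact Or.inr ⟨Set.mem_univ _, hp⟩
    have hFint : Integrable (Function.uncurry fun x t => (R*s).eval x * (x - t)⁻¹) (μ.prod σ) := by
      have haesm : AEStronglyMeasurable (Function.uncurry fun x t => (R*s).eval x * (x - t)⁻¹) (μ.prod σ) := by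
        refine tp_aesm_prod (hA.prod hB) ?_ ?_
        · have hU : (μ.prod σ) ((Aᶜ ×ˢ (Set.univ : Set ℝ)) ∪ ((Set.univ : Set ℝ) ×ˢ Bᶜ)) = 0 :=
            measure_union_null
              (by rw [Measure.prod_prod, measure_mono_null (Set.compl_subset_compl.2 hΔA) hμsupp, zero_mul])
              (by rw [Measure.prod_prod, measure_mono_null (Set.compl_subset_compl.2 hcdB) hσsupp, mul_zero])
          refine measure_mono_null (fun p hp => ?_) hU
          simp only [Set.mem_compl_iff, Set.mem_prod, not_and_or] at hp
          rcases hp with hp | hp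
          · exact Or.inl ⟨hp, Set.mem_univ _⟩
          · exact Or.inr ⟨Set.mem_univ _, hp⟩
        · refine ContinuousOn.mul ?_ ?_
          · exact ((R*s).continuous_aeval.comp continuous_fst).continuousOn
          · refine ContinuousOn.inv₀ (continuous_fst.sub continuous_snd).continuousOn ?_
            rintro ⟨x, t⟩ ⟨hx, ht⟩
            exact sub_ne_zero.2 (hAB x hx t ht)
      refine (integrable_const (Ms * δ⁻¹)).mono' haesm ?_
      filter_upwards [haeprod] with p hp
      rw [Function.uncurry]
      rw [Real.norm_eq_abs, abs_mul]
      have h1 := hMs p.1 hp.1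
      have h2 := hinvbd p.1 hp.1 p.2 (hIcoIcc hp.2)
      have h3 : (0:ℝ) ≤ Ms := le_trans (abs_nonneg _) (hMs (-1) (by norm_num))
      exact mul_le_mul h1 h2 (abs_nonneg _) h3
    have hswap := MeasureTheory.integral_integral_swap hFint
    have hLHS : ∫ x, ∫ t, (R*s).eval x * (x - t)⁻¹ ∂σ ∂μ = 0 := by
      have h1 : ∀ x, ∫ t, (R*s).eval x * (x - t)⁻¹ ∂σ = R.eval x * s.eval x * f x := by
        intro x
        rw [MeasureTheory.integral_const_mul, hfdef]
        simp [Polynomial.eval_mul]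
      rw [show (fun x => ∫ t, (R*s).eval x * (x - t)⁻¹ ∂σ)
        = fun x => R.eval x * s.eval x * f x from funext h1]
      exact fact2 s hs
    have hRHS : ∫ t, ∫ x, (R*s).eval x * (x - t)⁻¹ ∂μ ∂σ = ∫ t, s.eval t * g t ∂σ := by
      refine integral_congr_ae ?_
      filter_upwards [hσae] with t ht
      have htIco : t ∈ Set.Ico c b := hIcoIcc ht
      set q := s /ₘ (Polynomial.X - Polynomial.C t) with hqdef
      have hsq : s.eval t + (Polynomial.X - Polynomial.C t).eval t * q.eval t = s.eval t := by simp
      have hdiv : ∀ x : ℝ, s.eval x = s.eval t + (x - t) * q.eval x := by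
        intro x
        conv_lhs => rw [← Polynomial.modByMonic_add_div s (Polynomial.X - Polynomial.C t)]
        rw [Polynomial.modByMonic_X_sub_C_eq_C_eval]
        simp [hqdef]
      have hqdeg : q.natDegree ≤ n := by
        rw [hqdef, Polynomial.natDegree_divByMonic s (Polynomial.monic_X_sub_C t),
          Polynomial.natDegree_X_sub_C]
        omega
      have hptw : ∀ᵐ x ∂μ, (R*s).eval x * (x - t)⁻¹
          = R.eval x * q.eval x + s.eval t * (R.eval x * (x - t)⁻¹) := by
        filter_upwards [hμae] with x hx
        have hxt : x - t ≠ 0 := sub_ne_zero.2 (hne_xt x hx t htIco)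
        rw [Polynomial.eval_mul, hdiv x]
        field_simp
        ring
      rw [integral_congr_ae hptw]
      rw [MeasureTheory.integral_add (IntPP R q) ((IntK1 R t htIco).const_mul _)]
      rw [fact1 q hqdeg, MeasureTheory.integral_const_mul, zero_add, hgdef]
    rw [hswap] at hLHS
    rw [← hRHS, hLHS]
  -- find n+1 distinct zeros of g, or derive a contradiction
  have hZbig : ∃ Fτ : Finset ℝ, ↑Fτ ⊆ {t ∈ Set.Ico c b | g t = 0} ∧ Fτ.card = n + 1 := by
    set Zg := {t ∈ Set.Ico c b | g t = 0} with hZgdef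
    by_contra hZsmall
    push_neg at hZsmall
    have hZfin : Zg.Finite := by
      by_contra hinf
      obtain ⟨Fτ, h1, h2⟩ := Set.Infinite.exists_subset_card_eq hinf (n+1)
      exact hZsmall Fτ h1 h2
    have hZcard : Zg.ncard ≤ n := by
      by_contra hbig
      obtain ⟨Z', hZ'1, hZ'2⟩ := Set.exists_subset_card_eq (s := Zg) (n := n+1) (by omega)
      have hZ'fin : Z'.Finite := hZfin.subset hZ'1
      refine hZsmall hZ'fin.toFinset ?_ ?_
      · rw [Set.Finite.coe_toFinset]; exact hZ'1
      · rw [← Set.ncard_eq_toFinset_card Z' hZ'fin, hZ'2]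
    obtain ⟨s, hsdeg, hspos, hsroot⟩ := tp_sign_lemma g c n b
      (hgcont.mono (fun t ht => hIcoΔ t ht)) hZfin hZcard
    have h0 : ∫ t, s.eval t * g t ∂σ = 0 := fact3 s hsdeg
    obtain ⟨Ms, hMs⟩ := tp_poly_bound s c d
    have hInt : Integrable (fun t => s.eval t * g t) σ := by
      have haesm : AEStronglyMeasurable (fun t => s.eval t * g t) σ := by
        refine (s.continuous_aeval.aestronglyMeasurable).mul
          (tp_aesm isClosed_Icc.isOpen_compl ?_ hgcont)
        rwa [compl_compl]
      refine (integrable_const (Ms * (MR * δ⁻¹ * (μ Set.univ).toReal))).mono' haesm ?_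
      filter_upwards [hσae] with t ht
      rw [Real.norm_eq_abs, abs_mul]
      have h1 := hMs t ht
      have h2 := hgbd t (hIcoIcc ht)
      have h3 : (0:ℝ) ≤ Ms := le_trans (abs_nonneg _) (hMs c ⟨le_refl c, hcd⟩)
      exact mul_le_mul h1 h2 (abs_nonneg _) h3
    have hnn : 0 ≤ᵐ[σ] fun t => s.eval t * g t := by
      filter_upwards [hσae] with t ht
      have h := hspos t (hIcoIcc ht)
      simp only [Pi.zero_apply]
      nlinarith [h]
    have hz := (MeasureTheory.integral_eq_zero_iff_of_nonneg_ae hnn hInt).1 h0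
    have hnull : σ {t | s.eval t * g t ≠ 0} = 0 := by
      have h : ∀ᵐ t ∂σ, s.eval t * g t = 0 := hz
      simpa [MeasureTheory.ae_iff] using h
    have hsubZg : measSupport σ ⊆ Zg := by
      intro x hx
      have hxcd : x ∈ Set.Icc c d := tp_supp_subset isClosed_Icc hσsupp hx
      have hxIco : x ∈ Set.Ico c b := hIcoIcc hxcd
      refine ⟨hxIco, ?_⟩
      by_contra hgx
      have hsx : s.eval x ≠ 0 := fun h => hgx (hsroot x h).2
      have hgc : ContinuousAt g x :=
        hgcont.continuousAt (isClosed_Icc.isOpen_compl.mem_nhds (hIcoΔ x hxIco))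
      have hcc : ContinuousAt (fun t => s.eval t * g t) x :=
        (s.continuous_aeval.continuousAt).mul hgc
      have hev := hcc.eventually_ne (mul_ne_zero hsx hgx)
      exact hx {t | s.eval t * g t ≠ 0} hev hnull
    exact hσinf (hZfin.subset hsubZg)
  obtain ⟨Fτ, hFτsub, hFτcard⟩ := hZbig
  have hFτIco : ∀ τ ∈ Fτ, τ ∈ Set.Ico c b := fun τ hτ => (hFτsub (Finset.mem_coe.2 hτ)).1
  have hFτg : ∀ τ ∈ Fτ, g τ = 0 := fun τ hτ => (hFτsub (Finset.mem_coe.2 hτ)).2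
  have hgval : ∀ t : ℝ, g t = ∫ x, R.eval x * (x - t)⁻¹ ∂μ := fun t => by rw [hgdef]
  have hFτIcoSub : ∀ F : Finset ℝ, F ⊆ Fτ → ↑F ⊆ Set.Ico c b :=
    fun F hF τ hτ => hFτIco τ (hF (Finset.mem_coe.1 hτ))
  -- claim H: vanishing of pure Cauchy-kernel integrals
  have claimH : ∀ m : ℕ, ∀ F : Finset ℝ, F.card = m → F.Nonempty → F ⊆ Fτ →
      ∫ x, R.eval x * (∏ τ ∈ F, (x - τ))⁻¹ ∂μ = 0 := by
    intro m
    induction m using Nat.strong_induction_on with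
    | _ m IH =>
    intro F hcard hne hsub
    rcases eq_or_ne F.card 1 with h1 | h1
    · obtain ⟨τ, hτ⟩ := Finset.card_eq_one.1 h1
      subst hτ
      have hτF : τ ∈ Fτ := hsub (Finset.mem_singleton_self τ)
      have h := hFτg τ hτF
      rw [hgval] at h
      simpa [Finset.prod_singleton] using h
    · have hc1 : 1 ≤ F.card := Finset.card_pos.2 hne
      have hc2 : 2 ≤ F.card := by omega
      have hm2 : 2 ≤ m := hcard ▸ hc2
      obtain ⟨τ, hτF⟩ := hne
      have hne1 : (F.erase τ).Nonempty := by
        rw [← Finset.card_pos, Finset.card_erase_of_mem hτF]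
        omega
      obtain ⟨τ', hτ'F1⟩ := hne1
      have hττ' : τ ≠ τ' := fun h => (Finset.notMem_erase τ F) (h ▸ hτ'F1)
      have hτ'F : τ' ∈ F := Finset.mem_of_mem_erase hτ'F1
      have hτF2 : τ ∈ F.erase τ' := Finset.mem_erase.2 ⟨hττ', hτF⟩
      have hptw : ∀ᵐ x ∂μ, R.eval x * (∏ τ'' ∈ F, (x - τ''))⁻¹
          = (τ - τ')⁻¹ * (R.eval x * (∏ τ'' ∈ F.erase τ', (x - τ''))⁻¹
              - R.eval x * (∏ τ'' ∈ F.erase τ, (x - τ''))⁻¹) := by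
        filter_upwards [hμae] with x hx
        have hne0 : ∀ τ'' ∈ F, x - τ'' ≠ 0 :=
          fun τ'' h => sub_ne_zero.2 (hne_xt x hx τ'' (hFτIco τ'' (hsub h)))
        have hE1 : ∏ τ'' ∈ F.erase τ, (x - τ'')
            = (x - τ') * ∏ τ'' ∈ (F.erase τ).erase τ', (x - τ'') :=
          (Finset.mul_prod_erase _ _ hτ'F1).symm
        have hE2 : ∏ τ'' ∈ F.erase τ', (x - τ'')
            = (x - τ) * ∏ τ'' ∈ (F.erase τ).erase τ', (x - τ'') := by
          rw [Finset.erase_right_comm]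
          exact (Finset.mul_prod_erase _ _ hτF2).symm
        have hP1 : ∏ τ'' ∈ F, (x - τ'')
            = (x - τ) * ((x - τ') * ∏ τ'' ∈ (F.erase τ).erase τ', (x - τ'')) := by
          rw [← hE1]
          exact (Finset.mul_prod_erase F _ hτF).symm
        have ha : x - τ ≠ 0 := hne0 τ hτF
        have hb : x - τ' ≠ 0 := hne0 τ' hτ'F
        have hC0 : (∏ τ'' ∈ (F.erase τ).erase τ', (x - τ'')) ≠ 0 :=
          Finset.prod_ne_zero_iff.2 fun i hi =>
            hne0 i (Finset.mem_of_mem_erase (Finset.mem_of_mem_erase hi))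
        have hττ'0 : τ - τ' ≠ 0 := sub_ne_zero.2 hττ'
        rw [hP1, hE1, hE2]
        field_simp
        ring
      rw [integral_congr_ae hptw, MeasureTheory.integral_const_mul]
      rw [MeasureTheory.integral_sub
        (IntPK R (F.erase τ') (hFτIcoSub _ ((Finset.erase_subset _ _).trans hsub)))
        (IntPK R (F.erase τ) (hFτIcoSub _ ((Finset.erase_subset _ _).trans hsub)))]
      rw [IH (F.erase τ).card (by rw [Finset.card_erase_of_mem hτF, hcard]; omega) _ rfl
        ⟨τ', hτ'F1⟩ ((Finset.erase_subset _ _).trans hsub)]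
      rw [IH (F.erase τ').card (by rw [Finset.card_erase_of_mem hτ'F, hcard]; omega) _ rfl
        ⟨τ, hτF2⟩ ((Finset.erase_subset _ _).trans hsub)]
      simp
  -- claim G: vanishing with polynomial numerators
  have claimG : ∀ m : ℕ, ∀ F : Finset ℝ, F.card = m → F ⊆ Fτ →
      ∀ r : Polynomial ℝ, r.natDegree ≤ n + m →
      ∫ x, R.eval x * r.eval x * (∏ τ ∈ F, (x - τ))⁻¹ ∂μ = 0 := by
    intro m
    induction m with
    | zero =>
      intro F hF0 _ r hr
      rw [Finset.card_eq_zero.1 hF0]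
      simp only [Finset.prod_empty, inv_one, mul_one]
      exact fact1 r (by simpa using hr)
    | succ m IH =>
      intro F hFcard hsub r hr
      have hne : F.Nonempty := Finset.card_pos.1 (by omega)
      obtain ⟨τ, hτF⟩ := hne
      have hF'card : (F.erase τ).card = m := by
        rw [Finset.card_erase_of_mem hτF, hFcard]
        omega
      obtain ⟨q, hqdeg, hdiv⟩ : ∃ q : Polynomial ℝ, q.natDegree ≤ n + m ∧
          ∀ x : ℝ, r.eval x = r.eval τ + (x - τ) * q.eval x := by
        refine ⟨r /ₘ (Polynomial.X - Polynomial.C τ), ?_, ?_⟩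
        · rw [Polynomial.natDegree_divByMonic r (Polynomial.monic_X_sub_C τ),
            Polynomial.natDegree_X_sub_C]
          omega
        · intro x
          conv_lhs => rw [← Polynomial.modByMonic_add_div r (Polynomial.X - Polynomial.C τ)]
          rw [Polynomial.modByMonic_X_sub_C_eq_C_eval]
          simp
      have hptw : ∀ᵐ x ∂μ, R.eval x * r.eval x * (∏ τ'' ∈ F, (x - τ''))⁻¹
          = R.eval x * q.eval x * (∏ τ'' ∈ F.erase τ, (x - τ''))⁻¹
            + r.eval τ * (R.eval x * (∏ τ'' ∈ F, (x - τ''))⁻¹) := by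
        filter_upwards [hμae] with x hx
        have hne0 : ∀ τ'' ∈ F, x - τ'' ≠ 0 :=
          fun τ'' h => sub_ne_zero.2 (hne_xt x hx τ'' (hFτIco τ'' (hsub h)))
        have hP1 : ∏ τ'' ∈ F, (x - τ'') = (x - τ) * ∏ τ'' ∈ F.erase τ, (x - τ'') :=
          (Finset.mul_prod_erase F _ hτF).symm
        have hE0 : (∏ τ'' ∈ F.erase τ, (x - τ'')) ≠ 0 :=
          Finset.prod_ne_zero_iff.2 fun i hi => hne0 i (Finset.mem_of_mem_erase hi)
        have ha : x - τ ≠ 0 := hne0 τ hτF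
        rw [hdiv x, hP1]
        field_simp
        ring
      rw [integral_congr_ae hptw]
      rw [MeasureTheory.integral_add
        (IntPPK R q _ (hFτIcoSub _ ((Finset.erase_subset _ _).trans hsub)))
        ((IntPK R F (hFτIcoSub _ hsub)).const_mul _)]
      rw [IH (F.erase τ) hF'card ((Finset.erase_subset _ _).trans hsub) q hqdeg]
      rw [MeasureTheory.integral_const_mul, claimH (m+1) F hFcard ⟨τ, hτF⟩ hsub]
      simp
  -- conclude
  have hfin0 : ∫ x, R.eval x * R.eval x * (∏ τ ∈ Fτ, (x - τ))⁻¹ ∂μ = 0 :=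
    claimG (n+1) Fτ hFτcard (Finset.Subset.refl Fτ) R (by omega)
  set ε := (-ee)^(n+1) with hεdef
  have hε : ε * ε = 1 := by
    have h : (-ee) * (-ee) = 1 := by rcases hee with h | h <;> rw [h] <;> norm_num
    rw [hεdef, ← mul_pow, h, one_pow]
  have hεinv : ε⁻¹ = ε := inv_eq_of_mul_eq_one_right hε
  have hεne : ε ≠ 0 := left_ne_zero_of_mul_eq_one hε
  have hprodpos : ∀ x ∈ Set.Icc (-1:ℝ) 1, 0 < ε * ∏ τ ∈ Fτ, (x - τ) := by
    intro x hx
    have h1 : ∀ τ ∈ Fτ, (x - τ) = (-ee) * (ee * (τ - x)) := by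
      intro τ _
      rcases hee with h | h <;> rw [h] <;> ring
    have hkey : ε * ∏ τ ∈ Fτ, (x - τ) = ∏ τ ∈ Fτ, (ee * (τ - x)) := by
      rw [Finset.prod_congr rfl h1, Finset.prod_mul_distrib, Finset.prod_const, hFτcard,
        ← mul_assoc, ← hεdef, hε, one_mul]
    rw [hkey]
    exact Finset.prod_pos fun τ hτ => lt_of_lt_of_le hδ (hsep x hx τ (hFτIco τ hτ))
  set φ := fun x => ε * (R.eval x * R.eval x * (∏ τ ∈ Fτ, (x - τ))⁻¹) with hφdef
  have hφ0 : ∫ x, φ x ∂μ = 0 := by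
    rw [hφdef, MeasureTheory.integral_const_mul, hfin0, mul_zero]
  have hφnn : 0 ≤ᵐ[μ] φ := by
    filter_upwards [hμae] with x hx
    simp only [Pi.zero_apply, hφdef]
    have h2 := hprodpos x hx
    have h3 : 0 < ε * (∏ τ ∈ Fτ, (x - τ))⁻¹ := by
      have h4 := inv_pos.2 h2
      rwa [mul_inv, hεinv] at h4
    have h5 : ε * (R.eval x * R.eval x * (∏ τ ∈ Fτ, (x - τ))⁻¹)
        = (R.eval x * R.eval x) * (ε * (∏ τ ∈ Fτ, (x - τ))⁻¹) := by ring
    rw [h5]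
    exact mul_nonneg (mul_self_nonneg _) h3.le
  have hφint : Integrable φ μ :=
    (IntPPK R R Fτ (hFτIcoSub Fτ (Finset.Subset.refl _))).const_mul ε
  have hz := (MeasureTheory.integral_eq_zero_iff_of_nonneg_ae hφnn hφint).1 hφ0
  have hnull : μ {x | φ x ≠ 0} = 0 := by
    have h : ∀ᵐ x ∂μ, φ x = 0 := hz
    simpa [MeasureTheory.ae_iff] using h
  have hRzero : R = 0 := by
    refine Polynomial.eq_zero_of_infinite_isRoot R (hμinf.mono ?_)
    intro x hx
    simp only [Set.mem_setOf_eq, Polynomial.IsRoot]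
    by_contra hRx
    have hxΔ : x ∈ Set.Icc (-1:ℝ) 1 := tp_supp_subset isClosed_Icc hμsupp hx
    have hOopen : IsOpen ({y : ℝ | R.eval y ≠ 0} ∩ (↑Fτ : Set ℝ)ᶜ) := by
      refine IsOpen.inter ?_ (Fτ.finite_toSet.isClosed.isOpen_compl)
      exact isOpen_compl_singleton.preimage R.continuous_aeval
    have hxO : x ∈ ({y : ℝ | R.eval y ≠ 0} ∩ (↑Fτ : Set ℝ)ᶜ) := by
      refine ⟨hRx, fun hxF => ?_⟩
      exact hIcoΔ x (hFτIco x (Finset.mem_coe.1 hxF)) hxΔ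
    have hOsub : ({y : ℝ | R.eval y ≠ 0} ∩ (↑Fτ : Set ℝ)ᶜ) ⊆ {y | φ y ≠ 0} := by
      rintro y ⟨hy1, hy2⟩
      have hyF : ∀ τ ∈ Fτ, y - τ ≠ 0 :=
        fun τ hτ => sub_ne_zero.2 fun h => hy2 (h ▸ Finset.mem_coe.2 hτ)
      have hprne : (∏ τ ∈ Fτ, (y - τ)) ≠ 0 := Finset.prod_ne_zero_iff.2 hyF
      simp only [hφdef, Set.mem_setOf_eq]
      exact mul_ne_zero hεne (mul_ne_zero (mul_ne_zero hy1 hy1) (inv_ne_zero hprne))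
    exact hx _ (hOopen.mem_nhds hxO) (measure_mono_null hOsub hnull)
  rw [hRdef] at hRzero
  exact sub_eq_zero.1 hRzero
end
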